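/- arXiv:2203.14179 — 6 statements merged into one kernel-verified Lean document; each statement's English description precedes it below -/
import Mathlib

section
/- Let n be a positive integer and let E : ℝ × ℝⁿ → ℝⁿ be a C² map of the form E(ℓ, s) = ℓ·s + H(ℓ, s), where H(ℓ, s) := E(ℓ, s) − ℓ·s satisfies: there exist constants C > 0 and δ > 0 such that ‖H(ℓ, s)‖ ≤ C·‖s‖² for all |ℓ| ≤ δ and ‖s‖ ≤ δ. Then there exist ε > 0, δ′ > 0 and a continuous function ℓ* : {s ∈ ℝⁿ : ‖s‖ < ε} → ℝ with ℓ*(0) = 0, such that for every s with 0 < ‖s‖ < ε, the value ℓ = ℓ*(s) is the unique number in (−δ′, δ′) satisfying ⟨s, ℓ·s + H(ℓ, s)⟩ = 0; moreover |ℓ*(s)| ≤ C·‖s‖ for all ‖s‖ < ε. -/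
open scoped RealInnerProductSpace
open Set Filter Metric Asymptotics

set_option maxHeartbeats 2000000

/-- The implicit-function-theorem step in the proof of the Krasnoselski bifurcation theorem
(Theorem 7.1 of the paper): for a `C²` map `E (ℓ, s) = ℓ • s + H (ℓ, s)` with
`‖H (ℓ, s)‖ ≤ C ‖s‖²` near the origin, there is a continuous function `ℓ*` of `s`, with
`ℓ* 0 = 0`, such that for `0 < ‖s‖ < ε` the value `ℓ = ℓ* s` is the unique number in
`(-δ', δ')` with `⟪s, ℓ • s + H (ℓ, s)⟫ = 0`; moreover `|ℓ* s| ≤ C ‖s‖`. -/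
theorem krasnoselski_implicit_function_step
    (n : ℕ) (hn : 0 < n)
    (E : ℝ × EuclideanSpace ℝ (Fin n) → EuclideanSpace ℝ (Fin n))
    (hE : ContDiff ℝ 2 E)
    (C δ : ℝ) (hC : 0 < C) (hδ : 0 < δ)
    (hH : ∀ (ℓ : ℝ) (s : EuclideanSpace ℝ (Fin n)), |ℓ| ≤ δ → ‖s‖ ≤ δ →
      ‖E (ℓ, s) - ℓ • s‖ ≤ C * ‖s‖ ^ 2) :
    ∃ (ε δ' : ℝ), 0 < ε ∧ 0 < δ' ∧
      ∃ ℓstar : EuclideanSpace ℝ (Fin n) → ℝ,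
        ContinuousOn ℓstar {s | ‖s‖ < ε} ∧
        ℓstar 0 = 0 ∧
        (∀ s : EuclideanSpace ℝ (Fin n), 0 < ‖s‖ → ‖s‖ < ε →
          |ℓstar s| < δ' ∧
          ⟪s, ℓstar s • s + (E (ℓstar s, s) - ℓstar s • s)⟫ = 0 ∧
          (∀ ℓ : ℝ, |ℓ| < δ' → ⟪s, ℓ • s + (E (ℓ, s) - ℓ • s)⟫ = 0 → ℓ = ℓstar s)) ∧
        (∀ s : EuclideanSpace ℝ (Fin n), ‖s‖ < ε → |ℓstar s| ≤ C * ‖s‖) := by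
  classical
  set Hf : ℝ × EuclideanSpace ℝ (Fin n) → EuclideanSpace ℝ (Fin n) := fun p => E p - p.1 • p.2 with hHf_def
  have hHf : ContDiff ℝ 2 Hf := hE.sub (contDiff_fst.smul contDiff_snd)
  have hHd : Differentiable ℝ Hf := hHf.differentiable (by norm_num)
  set DH := fderiv ℝ Hf with hDH_def
  have hDH : ContDiff ℝ 1 DH := hHf.fderiv_right (by norm_num)
  have hDHd : Differentiable ℝ DH := hDH.differentiable (by norm_num)
  set A : ℝ × EuclideanSpace ℝ (Fin n) → EuclideanSpace ℝ (Fin n) := fun p => DH p (1, 0) with hA_def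
  have hA : ContDiff ℝ 1 A :=
    (ContinuousLinearMap.apply ℝ (EuclideanSpace ℝ (Fin n)) ((1 : ℝ), (0 : EuclideanSpace ℝ (Fin n)))).contDiff.comp hDH
  have hAd : Differentiable ℝ A := hA.differentiable (by norm_num)
  -- H vanishes on the axis
  have hHbound : ∀ (ℓ : ℝ) (s : EuclideanSpace ℝ (Fin n)), |ℓ| ≤ δ → ‖s‖ ≤ δ → ‖Hf (ℓ, s)‖ ≤ C * ‖s‖ ^ 2 :=
    fun ℓ s h1 h2 => hH ℓ s h1 h2
  have hH0 : ∀ ℓ : ℝ, |ℓ| ≤ δ → Hf (ℓ, 0) = 0 := by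
    intro ℓ hℓ
    have := hHbound ℓ 0 hℓ (by simp [hδ.le])
    simpa [norm_le_zero_iff] using this
  -- the ℓ-derivative of H vanishes on the axis
  have hDH0 : ∀ ℓ : ℝ, |ℓ| < δ → DH (ℓ, 0) = 0 := by
    intro ℓ hℓ
    have h1 : HasFDerivAt Hf (0 : ℝ × EuclideanSpace ℝ (Fin n) →L[ℝ] EuclideanSpace ℝ (Fin n)) (ℓ, 0) := by
      rw [hasFDerivAt_iff_isLittleO_nhds_zero]
      rw [isLittleO_iff]
      intro c hc
      have hρ : 0 < min (c / C) (δ - |ℓ|) := lt_min (div_pos hc hC) (by linarith)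
      filter_upwards [Metric.ball_mem_nhds (0 : ℝ × EuclideanSpace ℝ (Fin n)) hρ] with q hq
      have hq' : ‖q‖ < min (c / C) (δ - |ℓ|) := by simpa using hq
      have hq1 : |((ℓ, (0 : EuclideanSpace ℝ (Fin n))) + q).1| ≤ δ := by
        have : |q.1| ≤ ‖q‖ := norm_fst_le q
        have := hq'.trans_le (min_le_right _ _)
        simp only [Prod.fst_add]
        calc |ℓ + q.1| ≤ |ℓ| + |q.1| := abs_add_le _ _
          _ ≤ δ := by have h2 : |q.1| ≤ ‖q‖ := norm_fst_le q; linarith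
      have hq2 : ‖((ℓ, (0 : EuclideanSpace ℝ (Fin n))) + q).2‖ ≤ δ := by
        have h2 : ‖q.2‖ ≤ ‖q‖ := norm_snd_le q
        have := hq'.trans_le (min_le_right _ _)
        have hl0 : 0 ≤ |ℓ| := abs_nonneg ℓ
        simp only [Prod.snd_add]
        simpa using by linarith
      have key : ‖Hf ((ℓ, (0 : EuclideanSpace ℝ (Fin n))) + q)‖ ≤ C * ‖((ℓ, (0:EuclideanSpace ℝ (Fin n))) + q).2‖ ^ 2 :=
        hHbound _ _ hq1 hq2
      have h2 : ‖q.2‖ ≤ ‖q‖ := norm_snd_le q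
      have hcC : ‖q‖ < c / C := hq'.trans_le (min_le_left _ _)
      have : ‖Hf ((ℓ, (0 : EuclideanSpace ℝ (Fin n))) + q)‖ ≤ C * ‖q‖ ^ 2 := by
        refine key.trans ?_
        have : ‖((ℓ, (0:EuclideanSpace ℝ (Fin n))) + q).2‖ = ‖q.2‖ := by simp
        rw [this]
        have := sq_le_sq' (by linarith [norm_nonneg q.2, norm_nonneg q]) h2
        nlinarith [norm_nonneg q.2, norm_nonneg q]
      simp only [hH0 ℓ hℓ.le, sub_zero, ContinuousLinearMap.zero_apply]
      calc ‖Hf ((ℓ, (0:EuclideanSpace ℝ (Fin n))) + q)‖ ≤ C * ‖q‖ ^ 2 := this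
        _ ≤ c * ‖q‖ := by
            have hqc : ‖q‖ * C ≤ c := (le_div_iff₀ hC).mp hcC.le
            nlinarith [norm_nonneg q]
    exact ((hHd (ℓ, 0)).hasFDerivAt.unique h1)
  have hA0 : ∀ ℓ : ℝ, |ℓ| < δ → A (ℓ, 0) = 0 := by
    intro ℓ hℓ; simp [hA_def, hDH0 ℓ hℓ]
  -- second derivative at the origin, in the ℓ-direction, vanishes
  set D2 := fderiv ℝ DH (0, 0) with hD2_def
  have hsym : ∀ v w : ℝ × EuclideanSpace ℝ (Fin n), D2 v w = D2 w v := fun v w =>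
    second_derivative_symmetric (fun y => (hHd y).hasFDerivAt) (hDHd (0, 0)).hasFDerivAt v w
  have hD2l : D2 ((1 : ℝ), (0 : EuclideanSpace ℝ (Fin n))) = 0 := by
    have hcurve : HasDerivAt (fun t : ℝ => ((t, 0) : ℝ × EuclideanSpace ℝ (Fin n))) ((1 : ℝ), (0 : EuclideanSpace ℝ (Fin n))) 0 :=
      (hasDerivAt_id 0).prodMk (hasDerivAt_const 0 0)
    have h1 : HasDerivAt (fun t : ℝ => DH (t, 0)) (D2 ((1:ℝ), (0:EuclideanSpace ℝ (Fin n)))) 0 :=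
      (hDHd (0, 0)).hasFDerivAt.comp_hasDerivAt 0 hcurve
    have h2 : HasDerivAt (fun t : ℝ => DH (t, 0)) 0 0 := by
      have hev : (fun t : ℝ => DH (t, 0)) =ᶠ[nhds (0:ℝ)] fun _ => (0 : ℝ × EuclideanSpace ℝ (Fin n) →L[ℝ] EuclideanSpace ℝ (Fin n)) := by
        filter_upwards [Metric.ball_mem_nhds (0:ℝ) hδ] with t ht
        exact hDH0 t (by simpa [Real.dist_eq] using ht)
      exact (hasDerivAt_const 0 (0 : ℝ × EuclideanSpace ℝ (Fin n) →L[ℝ] EuclideanSpace ℝ (Fin n))).congr_of_eventuallyEq hev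
    exact h1.unique h2
  have hfdA : fderiv ℝ A (0, 0) = 0 := by
    have hcomp : HasFDerivAt A
        ((ContinuousLinearMap.apply ℝ (EuclideanSpace ℝ (Fin n)) ((1:ℝ), (0:EuclideanSpace ℝ (Fin n)))).comp D2) (0, 0) :=
      (ContinuousLinearMap.apply ℝ (EuclideanSpace ℝ (Fin n)) ((1:ℝ), (0:EuclideanSpace ℝ (Fin n)))).hasFDerivAt.comp (0, 0)
        (hDHd (0, 0)).hasFDerivAt
    rw [hcomp.fderiv]
    refine ContinuousLinearMap.ext fun v => ?_
    have : D2 v ((1:ℝ), (0:EuclideanSpace ℝ (Fin n))) = D2 ((1:ℝ), (0:EuclideanSpace ℝ (Fin n))) v := hsym v _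
    simp only [ContinuousLinearMap.comp_apply, ContinuousLinearMap.apply_apply,
      ContinuousLinearMap.zero_apply]
    rw [this, hD2l]
    simp
  -- a ball on which the derivative of A is small
  obtain ⟨r, hr0, hrδ, hrb⟩ :
      ∃ r : ℝ, 0 < r ∧ r < δ ∧
        ∀ p ∈ Metric.closedBall (0 : ℝ × EuclideanSpace ℝ (Fin n)) r,
          ‖fderiv ℝ A p‖ ≤ 1 / 2 := by
    have hcont : Continuous fun p => fderiv ℝ A p := hA.continuous_fderiv (by norm_num)
    have hev : ∀ᶠ p in nhds (0 : ℝ × EuclideanSpace ℝ (Fin n)), ‖fderiv ℝ A p‖ < 1 / 2 := by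
      have : ContinuousAt (fun p => ‖fderiv ℝ A p‖) (0, 0) := (hcont.norm).continuousAt
      have h0 : ‖fderiv ℝ A ((0:ℝ), (0:EuclideanSpace ℝ (Fin n)))‖ = 0 := by
        rw [hfdA]; simp
      have := this.eventually_lt_const (by rw [h0]; norm_num : ‖fderiv ℝ A ((0:ℝ), (0:EuclideanSpace ℝ (Fin n)))‖ < 1/2)
      exact this
    obtain ⟨ρ, hρ0, hball⟩ := Metric.eventually_nhds_iff_ball.mp hev
    refine ⟨min (ρ / 2) (δ / 2), by positivity, lt_of_le_of_lt (min_le_right _ _) (by linarith), ?_⟩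
    intro p hp
    refine (hball p ?_).le
    have : ‖p‖ ≤ min (ρ / 2) (δ / 2) := by simpa using hp
    have : ‖p‖ < ρ := lt_of_le_of_lt (this.trans (min_le_left _ _)) (by linarith)
    simpa [Metric.mem_ball] using this
  -- bound on A
  have hAb : ∀ (ℓ : ℝ) (s : EuclideanSpace ℝ (Fin n)), |ℓ| ≤ r → ‖s‖ ≤ r →
      ‖A (ℓ, s)‖ ≤ ‖s‖ / 2 := by
    intro ℓ s h1 h2
    have hx : ((ℓ, (0:EuclideanSpace ℝ (Fin n))) : ℝ × EuclideanSpace ℝ (Fin n)) ∈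
        Metric.closedBall (0 : ℝ × EuclideanSpace ℝ (Fin n)) r := by
      simp [Prod.norm_def, abs_of_nonneg, h1, hr0.le]
    have hy : ((ℓ, s) : ℝ × EuclideanSpace ℝ (Fin n)) ∈
        Metric.closedBall (0 : ℝ × EuclideanSpace ℝ (Fin n)) r := by
      simp [Prod.norm_def, h1, h2]
    have := (convex_closedBall (0 : ℝ × EuclideanSpace ℝ (Fin n)) r).norm_image_sub_le_of_norm_fderiv_le
      (fun x _ => hAd x) hrb hx hy
    have hA0' : A (ℓ, 0) = 0 := hA0 ℓ (lt_of_le_of_lt h1 hrδ)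
    rw [hA0', sub_zero] at this
    have hnorm : ‖((ℓ, s) : ℝ × EuclideanSpace ℝ (Fin n)) - (ℓ, 0)‖ = ‖s‖ := by
      simp [Prod.norm_def]
    rw [hnorm] at this
    linarith
  -- the scalar function φ
  set φ : EuclideanSpace ℝ (Fin n) → ℝ → ℝ := fun s t => t * ‖s‖ ^ 2 + ⟪s, Hf (t, s)⟫ with hφ_def
  have hφ_eq : ∀ (s : EuclideanSpace ℝ (Fin n)) (ℓ : ℝ),
      ⟪s, ℓ • s + (E (ℓ, s) - ℓ • s)⟫ = φ s ℓ := by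
    intro s ℓ
    have : (ℓ • s + (E (ℓ, s) - ℓ • s)) = ℓ • s + Hf (ℓ, s) := rfl
    rw [this, inner_add_right, real_inner_smul_right, real_inner_self_eq_norm_sq]
  have hφ_deriv : ∀ (s : EuclideanSpace ℝ (Fin n)) (t : ℝ),
      HasDerivAt (φ s) (‖s‖ ^ 2 + ⟪s, A (t, s)⟫) t := by
    intro s t
    have hc : HasDerivAt (fun u : ℝ => ((u, s) : ℝ × EuclideanSpace ℝ (Fin n))) (1, 0) t :=
      (hasDerivAt_id t).prodMk (hasDerivAt_const t s)
    have h1 : HasDerivAt (fun u : ℝ => Hf (u, s)) (A (t, s)) t :=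
      by have := (hHd (t, s)).hasFDerivAt.comp_hasDerivAt t hc; exact this
    have h2 : HasDerivAt (fun u : ℝ => ⟪s, Hf (u, s)⟫) ⟪s, A (t, s)⟫ t := by
      have := (innerSL ℝ s).hasFDerivAt.comp_hasDerivAt t h1
      exact this
    have h3 : HasDerivAt (fun u : ℝ => u * ‖s‖ ^ 2) (‖s‖ ^ 2) t := by
      simpa using (hasDerivAt_id t).mul_const (‖s‖ ^ 2)
    exact h3.add h2
  have hφ_cont : Continuous fun q : EuclideanSpace ℝ (Fin n) × ℝ => φ q.1 q.2 := by
    apply Continuous.add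
    · exact continuous_snd.mul ((continuous_fst.norm).pow 2)
    · exact continuous_fst.inner (hHf.continuous.comp (continuous_snd.prodMk continuous_fst))
  -- constants
  set δ' : ℝ := r / 2 with hδ'_def
  set ε : ℝ := min (r / 2) (r / (4 * (C + 1))) with hε_def
  have hδ'0 : 0 < δ' := half_pos hr0
  have hε0 : 0 < ε := lt_min (half_pos hr0) (by positivity)
  have hεr : ε ≤ r / 2 := min_le_left _ _
  have hεδ' : ∀ s : EuclideanSpace ℝ (Fin n), ‖s‖ < ε → C * ‖s‖ < δ' := by
    intro s hs
    have h1 : ‖s‖ < r / (4 * (C + 1)) := lt_of_lt_of_le hs (min_le_right _ _)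
    have h2 : ‖s‖ * (4 * (C + 1)) < r := by
      rw [← lt_div_iff₀ (by positivity)]; exact h1
    nlinarith [norm_nonneg s]
  have hδ'δ : δ' < δ := by rw [hδ'_def]; linarith
  have hδ'r : δ' ≤ r := by rw [hδ'_def]; linarith
  -- strict monotonicity
  have hmono : ∀ s : EuclideanSpace ℝ (Fin n), 0 < ‖s‖ → ‖s‖ < ε →
      StrictMonoOn (φ s) (Icc (-δ') δ') := by
    intro s hs0 hsε
    apply strictMonoOn_of_deriv_pos (convex_Icc _ _)
    · exact fun t _ => ((hφ_deriv s t).continuousAt).continuousWithinAt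
    · intro t ht
      rw [interior_Icc] at ht
      rw [(hφ_deriv s t).deriv]
      have htr : |t| ≤ r := by
        rw [abs_le]; constructor <;> [linarith [ht.1, hδ'r]; linarith [ht.2, hδ'r]]
      have hsr : ‖s‖ ≤ r := by linarith [hεr, hsε, hr0]
      have hAbd := hAb t s htr hsr
      have hinner : |⟪s, A (t, s)⟫| ≤ ‖s‖ * (‖s‖ / 2) := by
        refine (abs_real_inner_le_norm s _).trans ?_
        exact mul_le_mul_of_nonneg_left hAbd (norm_nonneg s)
      have := abs_le.mp hinner
      nlinarith [hs0]
  -- existence of a zero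
  have hexists : ∀ s : EuclideanSpace ℝ (Fin n), 0 < ‖s‖ → ‖s‖ < ε →
      ∃ ℓ : ℝ, |ℓ| ≤ C * ‖s‖ ∧ φ s ℓ = 0 := by
    intro s hs0 hsε
    have hb0 : 0 ≤ C * ‖s‖ := by positivity
    have hbδ : C * ‖s‖ ≤ δ := le_of_lt (lt_trans (hεδ' s hsε) hδ'δ)
    have hsδ : ‖s‖ ≤ δ := by linarith [hεr, hsε, hδ'δ, hδ'0]
    have hcont : ContinuousOn (φ s) (Icc (-(C * ‖s‖)) (C * ‖s‖)) :=
      fun t _ => ((hφ_deriv s t).continuousAt).continuousWithinAt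
    have hinner1 : |⟪s, Hf (C * ‖s‖, s)⟫| ≤ ‖s‖ * (C * ‖s‖ ^ 2) := by
      refine (abs_real_inner_le_norm s _).trans ?_
      exact mul_le_mul_of_nonneg_left (hHbound _ s (by rwa [abs_of_nonneg hb0]) hsδ) (norm_nonneg s)
    have hinner2 : |⟪s, Hf (-(C * ‖s‖), s)⟫| ≤ ‖s‖ * (C * ‖s‖ ^ 2) := by
      refine (abs_real_inner_le_norm s _).trans ?_
      refine mul_le_mul_of_nonneg_left (hHbound _ s ?_ hsδ) (norm_nonneg s)
      rwa [abs_neg, abs_of_nonneg hb0]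
    have h1 : φ s (-(C * ‖s‖)) ≤ 0 := by
      have hx := (abs_le.mp hinner2).2
      have he : φ s (-(C * ‖s‖)) = -(C * ‖s‖) * ‖s‖ ^ 2 + ⟪s, Hf (-(C * ‖s‖), s)⟫ := rfl
      rw [he]
      calc -(C * ‖s‖) * ‖s‖ ^ 2 + ⟪s, Hf (-(C * ‖s‖), s)⟫
          ≤ -(C * ‖s‖) * ‖s‖ ^ 2 + ‖s‖ * (C * ‖s‖ ^ 2) := by linarith
        _ = 0 := by ring
    have h2 : 0 ≤ φ s (C * ‖s‖) := by
      have hx := (abs_le.mp hinner1).1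
      have he : φ s (C * ‖s‖) = (C * ‖s‖) * ‖s‖ ^ 2 + ⟪s, Hf (C * ‖s‖, s)⟫ := rfl
      rw [he]
      calc (0:ℝ) = (C * ‖s‖) * ‖s‖ ^ 2 + -(‖s‖ * (C * ‖s‖ ^ 2)) := by ring
        _ ≤ (C * ‖s‖) * ‖s‖ ^ 2 + ⟪s, Hf (C * ‖s‖, s)⟫ := by linarith
    have hmem : (0 : ℝ) ∈ Icc (φ s (-(C * ‖s‖))) (φ s (C * ‖s‖)) := ⟨h1, h2⟩
    obtain ⟨ℓ, hℓmem, hℓ0⟩ := intermediate_value_Icc (by linarith) hcont hmem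
    exact ⟨ℓ, abs_le.mpr ⟨hℓmem.1, hℓmem.2⟩, hℓ0⟩
  -- definition of ℓstar
  set ℓstar : EuclideanSpace ℝ (Fin n) → ℝ := fun s =>
    if h : 0 < ‖s‖ ∧ ‖s‖ < ε then Classical.choose (hexists s h.1 h.2) else 0 with hℓstar_def
  have hP : ∀ s : EuclideanSpace ℝ (Fin n), (h1 : 0 < ‖s‖) → (h2 : ‖s‖ < ε) →
      |ℓstar s| ≤ C * ‖s‖ ∧ φ s (ℓstar s) = 0 := by
    intro s h1 h2
    have : ℓstar s = Classical.choose (hexists s h1 h2) := by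
      simp only [hℓstar_def]; rw [dif_pos ⟨h1, h2⟩]
    rw [this]
    exact Classical.choose_spec (hexists s h1 h2)
  have hbound : ∀ s : EuclideanSpace ℝ (Fin n), |ℓstar s| ≤ C * ‖s‖ := by
    intro s
    by_cases h : 0 < ‖s‖ ∧ ‖s‖ < ε
    · exact (hP s h.1 h.2).1
    · have : ℓstar s = 0 := by simp only [hℓstar_def]; rw [dif_neg h]
      rw [this]; simp; positivity
  have hℓstar0 : ℓstar 0 = 0 := by
    simp only [hℓstar_def]; rw [dif_neg]; simp
  -- continuity away from 0
  have keyc : ∀ s₀ : EuclideanSpace ℝ (Fin n), 0 < ‖s₀‖ → ‖s₀‖ < ε → ContinuousAt ℓstar s₀ := by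
    intro s₀ h0 hε'
    rw [ContinuousAt, Metric.tendsto_nhds]
    intro η hη
    obtain ⟨hL1, hL2⟩ := hP s₀ h0 hε'
    have hLδ' : |ℓstar s₀| < δ' := lt_of_le_of_lt hL1 (hεδ' s₀ hε')
    set L := ℓstar s₀ with hLdef
    set η' := min (η / 2) ((δ' - |L|) / 2) with hη'def
    have hη'0 : 0 < η' := lt_min (half_pos hη) (by linarith)
    have habs : |L| + η' ≤ δ' := by
      have : η' ≤ (δ' - |L|) / 2 := min_le_right _ _
      linarith
    have hla := le_abs_self L
    have hlb := neg_abs_le L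
    have hmemL : L ∈ Icc (-δ') δ' := Set.mem_Icc.mpr (abs_le.mp hLδ'.le)
    have hmem1 : L - η' ∈ Icc (-δ') δ' := Set.mem_Icc.mpr ⟨by linarith, by linarith⟩
    have hmem2 : L + η' ∈ Icc (-δ') δ' := Set.mem_Icc.mpr ⟨by linarith, by linarith⟩
    have hφ1 : φ s₀ (L - η') < 0 := by
      have := hmono s₀ h0 hε' hmem1 hmemL (by linarith : L - η' < L)
      rwa [hL2] at this
    have hφ2 : 0 < φ s₀ (L + η') := by
      have := hmono s₀ h0 hε' hmemL hmem2 (by linarith : L < L + η')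
      rwa [hL2] at this
    have c1 : Continuous fun s : EuclideanSpace ℝ (Fin n) => φ s (L - η') :=
      hφ_cont.comp (continuous_id.prodMk continuous_const)
    have c2 : Continuous fun s : EuclideanSpace ℝ (Fin n) => φ s (L + η') :=
      hφ_cont.comp (continuous_id.prodMk continuous_const)
    have e1 : ∀ᶠ s in nhds s₀, φ s (L - η') < 0 := c1.continuousAt.eventually_lt_const hφ1
    have e2 : ∀ᶠ s in nhds s₀, 0 < φ s (L + η') := c2.continuousAt.eventually_const_lt hφ2
    have e3 : ∀ᶠ s : EuclideanSpace ℝ (Fin n) in nhds s₀, 0 < ‖s‖ :=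
      continuous_norm.continuousAt.eventually_const_lt h0
    have e4 : ∀ᶠ s : EuclideanSpace ℝ (Fin n) in nhds s₀, ‖s‖ < ε :=
      continuous_norm.continuousAt.eventually_lt_const hε'
    filter_upwards [e1, e2, e3, e4] with s hs1 hs2 hs3 hs4
    obtain ⟨hb, hz⟩ := hP s hs3 hs4
    have hsδ' : |ℓstar s| < δ' := lt_of_le_of_lt hb (hεδ' s hs4)
    have hmemS : ℓstar s ∈ Icc (-δ') δ' := Set.mem_Icc.mpr (abs_le.mp hsδ'.le)
    have hlt1 : L - η' < ℓstar s :=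
      ((hmono s hs3 hs4).lt_iff_lt hmem1 hmemS).mp (by rw [hz]; exact hs1)
    have hlt2 : ℓstar s < L + η' :=
      ((hmono s hs3 hs4).lt_iff_lt hmemS hmem2).mp (by rw [hz]; exact hs2)
    rw [Real.dist_eq, abs_lt]
    have : η' ≤ η / 2 := min_le_left _ _
    constructor <;> linarith
  -- continuity at 0
  have key0 : ContinuousAt ℓstar 0 := by
    rw [ContinuousAt, hℓstar0]
    have htend : Tendsto (fun s : EuclideanSpace ℝ (Fin n) => C * ‖s‖) (nhds 0) (nhds 0) := by
      have hcn : Continuous (fun s : EuclideanSpace ℝ (Fin n) => C * ‖s‖) :=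
        continuous_const.mul continuous_norm
      have := hcn.tendsto (0 : EuclideanSpace ℝ (Fin n))
      simpa using this
    exact squeeze_zero_norm (fun s => by simpa [Real.norm_eq_abs] using hbound s) htend
  -- assembly
  refine ⟨ε, δ', hε0, hδ'0, ℓstar, ?_, hℓstar0, ?_, ?_⟩
  · intro s hs
    by_cases h : s = 0
    · subst h; exact key0.continuousWithinAt
    · exact (keyc s (norm_pos_iff.mpr h) hs).continuousWithinAt
  · intro s h1 h2
    obtain ⟨hb, hz⟩ := hP s h1 h2
    have hδ'' : |ℓstar s| < δ' := lt_of_le_of_lt hb (hεδ' s h2)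
    refine ⟨hδ'', ?_, ?_⟩
    · rw [hφ_eq]; exact hz
    · intro ℓ hℓ hinner
      rw [hφ_eq] at hinner
      have hmemℓ : ℓ ∈ Icc (-δ') δ' := Set.mem_Icc.mpr (abs_le.mp hℓ.le)
      have hmemS : ℓstar s ∈ Icc (-δ') δ' := Set.mem_Icc.mpr (abs_le.mp hδ''.le)
      exact (hmono s h1 h2).injOn hmemℓ hmemS (hinner.trans hz.symm)
  · intro s _
    exact hbound s
end

section
/- Let U ⊆ ℝ² be open, let a₁, a₂ : U → ℝ be continuously differentiable and let f : U → ℂ be twice continuously differentiable. Then the magnetic Laplacian factorizes as −(∇₁(∇₁ f) + ∇₂(∇₂ f)) = −(∇₁ − i∇₂)((∇₁ + i∇₂) f) + (∂₁a₂ − ∂₂a₁)·f at every point of U. -/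
open Complex

/-- Partial derivative in the first coordinate of a function on `ℝ × ℝ`. -/
noncomputable def pd1 {F : Type*} [NormedAddCommGroup F] [NormedSpace ℝ F]
    (f : ℝ × ℝ → F) (p : ℝ × ℝ) : F :=
  fderiv ℝ f p (1, 0)

/-- Partial derivative in the second coordinate of a function on `ℝ × ℝ`. -/
noncomputable def pd2 {F : Type*} [NormedAddCommGroup F] [NormedSpace ℝ F]
    (f : ℝ × ℝ → F) (p : ℝ × ℝ) : F :=
  fderiv ℝ f p (0, 1)

/-- The covariant derivative `∇₁ f = ∂₁ f - i a₁ f`. -/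
noncomputable def cov1 (a₁ : ℝ × ℝ → ℝ) (f : ℝ × ℝ → ℂ) (p : ℝ × ℝ) : ℂ :=
  pd1 f p - Complex.I * (a₁ p : ℂ) * f p

/-- The covariant derivative `∇₂ f = ∂₂ f - i a₂ f`. -/
noncomputable def cov2 (a₂ : ℝ × ℝ → ℝ) (f : ℝ × ℝ → ℂ) (p : ℝ × ℝ) : ℂ :=
  pd2 f p - Complex.I * (a₂ p : ℂ) * f p

/-- The Weitzenböck-type factorization of the magnetic Laplacian
`−(∇₁∇₁ + ∇₂∇₂) f = −(∇₁ − i∇₂)((∇₁ + i∇₂) f) + (∂₁ a₂ − ∂₂ a₁) f`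
(local form of Proposition 3.3). -/
theorem magnetic_laplacian_factorization
    (U : Set (ℝ × ℝ)) (hU : IsOpen U)
    (a₁ a₂ : ℝ × ℝ → ℝ) (f : ℝ × ℝ → ℂ)
    (ha₁ : ContDiffOn ℝ 1 a₁ U) (ha₂ : ContDiffOn ℝ 1 a₂ U)
    (hf : ContDiffOn ℝ 2 f U) :
    ∀ p ∈ U,
      -(cov1 a₁ (cov1 a₁ f) p + cov2 a₂ (cov2 a₂ f) p)
        = -(cov1 a₁ (fun q => cov1 a₁ f q + Complex.I * cov2 a₂ f q) p
              - Complex.I *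
                cov2 a₂ (fun q => cov1 a₁ f q + Complex.I * cov2 a₂ f q) p)
          + ((pd1 a₂ p - pd2 a₁ p : ℝ) : ℂ) * f p := by
  intro p hp
  have hnh := hU.mem_nhds hp
  have hfA : ContDiffAt ℝ 2 f p := hf.contDiffAt hnh
  have df : DifferentiableAt ℝ f p := hfA.differentiableAt two_ne_zero
  have da1 : DifferentiableAt ℝ a₁ p := (ha₁.contDiffAt hnh).differentiableAt one_ne_zero
  have da2 : DifferentiableAt ℝ a₂ p := (ha₂.contDiffAt hnh).differentiableAt one_ne_zero
  have dDf : DifferentiableAt ℝ (fderiv ℝ f) p :=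
    (hfA.fderiv_right (m := 1) le_rfl).differentiableAt one_ne_zero
  have symm := (hfA.isSymmSndFDerivAt (by simp)) ((1:ℝ),(0:ℝ)) ((0:ℝ),(1:ℝ))
  have dpd : ∀ v : ℝ × ℝ, DifferentiableAt ℝ (fun q => fderiv ℝ f q v) p :=
    fun v => dDf.clm_apply (differentiableAt_const v)
  have pdD : ∀ v w : ℝ × ℝ, fderiv ℝ (fun q => fderiv ℝ f q v) p w
      = fderiv ℝ (fderiv ℝ f) p w v := by
    intro v w
    rw [fderiv_clm_apply dDf (differentiableAt_const v)]
    simp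
  -- facts about real-valued factors viewed in ℂ
  have dc : ∀ (a : ℝ × ℝ → ℝ), DifferentiableAt ℝ a p →
      DifferentiableAt ℝ (fun q => ((a q : ℝ) : ℂ)) p := fun a da =>
    (Complex.ofRealCLM.hasFDerivAt.comp p da.hasFDerivAt).differentiableAt
  have fc : ∀ (a : ℝ × ℝ → ℝ) (da : DifferentiableAt ℝ a p) (v : ℝ × ℝ),
      fderiv ℝ (fun q => ((a q : ℝ) : ℂ)) p v = ((fderiv ℝ a p v : ℝ) : ℂ) := by
    intro a da v
    have h : fderiv ℝ (⇑Complex.ofRealCLM ∘ a) p = Complex.ofRealCLM.comp (fderiv ℝ a p) :=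
      (Complex.ofRealCLM.hasFDerivAt.comp p da.hasFDerivAt).fderiv
    have h2 : (fun q => ((a q : ℝ) : ℂ)) = (⇑Complex.ofRealCLM ∘ a) := rfl
    rw [h2, h]
    simp
  -- differentiability of each covariant derivative function
  have dcov : ∀ (a : ℝ × ℝ → ℝ) (_ : DifferentiableAt ℝ a p) (u : ℝ × ℝ),
      DifferentiableAt ℝ (fun q => fderiv ℝ f q u - Complex.I * (a q : ℂ) * f q) p := by
    intro a da u
    exact (dpd u).sub (((differentiableAt_const Complex.I).mul (dc a da)).mul df)
  -- derivative of a covariant derivative function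
  have covD : ∀ (a : ℝ × ℝ → ℝ) (da : DifferentiableAt ℝ a p) (u v : ℝ × ℝ),
      fderiv ℝ (fun q => fderiv ℝ f q u - Complex.I * (a q : ℂ) * f q) p v
        = fderiv ℝ (fderiv ℝ f) p v u
          - Complex.I * ((a p : ℂ) * fderiv ℝ f p v + ((fderiv ℝ a p v : ℝ) : ℂ) * f p) := by
    intro a da u v
    have h1 : (fun q => fderiv ℝ f q u - Complex.I * (a q : ℂ) * f q)
        = fun q => fderiv ℝ f q u - Complex.I * ((a q : ℂ) * f q) := by
      simp [mul_assoc]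
    rw [h1, fderiv_fun_sub (dpd u) (((dc a da).fun_mul df).const_mul Complex.I)]
    rw [ContinuousLinearMap.sub_apply, pdD]
    rw [fderiv_const_mul ((dc a da).fun_mul df) Complex.I]
    rw [ContinuousLinearMap.smul_apply, fderiv_fun_mul (dc a da) df]
    rw [ContinuousLinearMap.add_apply, ContinuousLinearMap.smul_apply,
      ContinuousLinearMap.smul_apply, fc a da v]
    simp only [smul_eq_mul]
    ring
  -- derivative of the combined function cov1 f + I cov2 f
  have GD : ∀ v : ℝ × ℝ,
      fderiv ℝ (fun q => (fderiv ℝ f q ((1:ℝ),(0:ℝ)) - Complex.I * (a₁ q : ℂ) * f q)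
        + Complex.I * (fderiv ℝ f q ((0:ℝ),(1:ℝ)) - Complex.I * (a₂ q : ℂ) * f q)) p v
        = (fderiv ℝ (fderiv ℝ f) p v (1,0)
            - Complex.I * ((a₁ p : ℂ) * fderiv ℝ f p v + ((fderiv ℝ a₁ p v : ℝ) : ℂ) * f p))
          + Complex.I * (fderiv ℝ (fderiv ℝ f) p v (0,1)
            - Complex.I * ((a₂ p : ℂ) * fderiv ℝ f p v + ((fderiv ℝ a₂ p v : ℝ) : ℂ) * f p)) := by
    intro v
    rw [fderiv_fun_add (dcov a₁ da1 _) ((dcov a₂ da2 _).const_mul Complex.I)]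
    rw [ContinuousLinearMap.add_apply, fderiv_const_mul (dcov a₂ da2 _) Complex.I,
      ContinuousLinearMap.smul_apply, covD a₁ da1, covD a₂ da2]
    simp [smul_eq_mul]
  have e1 : cov1 a₁ f = fun q => fderiv ℝ f q ((1:ℝ),(0:ℝ)) - Complex.I * (a₁ q : ℂ) * f q := rfl
  have e2 : cov2 a₂ f = fun q => fderiv ℝ f q ((0:ℝ),(1:ℝ)) - Complex.I * (a₂ q : ℂ) * f q := rfl
  rw [e1, e2]
  simp only [cov1, cov2, pd1, pd2]
  rw [GD, GD, covD a₁ da1, covD a₂ da2, symm]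
  push_cast
  linear_combination ((((fderiv ℝ a₁ p) (0,1) : ℝ) : ℂ) * f p
      - (((fderiv ℝ a₂ p) (1,0) : ℝ) : ℂ) * f p
      - ((fderiv ℝ (fderiv ℝ f) p) (0,1)) (0,1)
      + Complex.I * (2 * ((a₂ p : ℝ) : ℂ) * (fderiv ℝ f p) (0,1)
          + (((fderiv ℝ a₂ p) (0,1) : ℝ) : ℂ) * f p)
      - Complex.I ^ 2 * ((a₂ p : ℝ) : ℂ) ^ 2 * f p) * Complex.I_sq
end

section
/- Let b ∈ ℝ and let u : ℍ → ℂ be twice continuously differentiable on the upper half-plane ℍ = {x + iy ∈ ℂ : y > 0}. Then at every point of ℍ: −y²(∂ₓₓu + ∂_yy u) + 2i·b·y·∂ₓu + b²·u − b·u = −y²·(∂ₓ − i∂_y)(Wu) + i·b·y·(Wu), where Wu = ∂ₓu + i·∂_y u − i·(b/y)·u. -/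
open Complex

/-- Partial derivative `∂ₓ` of a function on `ℂ ≅ ℝ²`. -/
noncomputable def pdx (u : ℂ → ℂ) (z : ℂ) : ℂ :=
  fderiv ℝ u z 1

/-- Partial derivative `∂_y` of a function on `ℂ ≅ ℝ²`. -/
noncomputable def pdy (u : ℂ → ℂ) (z : ℂ) : ℂ :=
  fderiv ℝ u z Complex.I

/-- The operator `W u = ∂ₓ u + i ∂_y u − i (b/y) u`, the coordinate expression of (twice)
the `(0,1)`-part of the covariant derivative for the connection `a^b = b y⁻¹ dx`. -/
noncomputable def Wop (b : ℝ) (u : ℂ → ℂ) (z : ℂ) : ℂ :=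
  pdx u z + Complex.I * pdy u z - Complex.I * ((b : ℂ) / (z.im : ℂ)) * u z

lemma hasFDerivAt_im_inv {z : ℂ} (hz : z.im ≠ 0) :
    HasFDerivAt (fun w : ℂ => ((w.im : ℂ))⁻¹)
      (Complex.ofRealCLM.comp
        (((1 : ℝ →L[ℝ] ℝ).smulRight (-(z.im ^ 2)⁻¹)).comp Complex.imCLM)) z := by
  have h1 : HasDerivAt (fun t : ℝ => t⁻¹) (-(z.im ^ 2)⁻¹) z.im := hasDerivAt_inv hz
  have h3 := h1.hasFDerivAt.comp z Complex.imCLM.hasFDerivAt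
  have h4 := Complex.ofRealCLM.hasFDerivAt.comp z h3
  have : (fun w : ℂ => ((w.im : ℂ))⁻¹)
      = (Complex.ofRealCLM ∘ ((fun t : ℝ => t⁻¹) ∘ fun w : ℂ => Complex.imCLM w)) := by
    funext w; simp [Function.comp, Complex.ofReal_inv]
  rw [this]
  exact h4


/-- The hyperbolic-coordinate form of the Weitzenböck factorization (Proposition 3.3,
underlying Theorem 3.1(b)–(c)): for the magnetic Laplacian
`L_b u = −y²(∂ₓₓ u + ∂_yy u) + 2 i b y ∂ₓ u + b² u` one has
`L_b u − b u = −y² (∂ₓ − i ∂_y)(W u) + i b y (W u)` on the upper half-plane. -/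
theorem magnetic_laplacian_weitzenboeck_hyperbolic
    (b : ℝ) (u : ℂ → ℂ) (hu : ContDiffOn ℝ 2 u {z : ℂ | 0 < z.im}) :
    ∀ z : ℂ, 0 < z.im →
      -(z.im : ℂ) ^ 2 * (pdx (pdx u) z + pdy (pdy u) z)
          + 2 * Complex.I * (b : ℂ) * (z.im : ℂ) * pdx u z
          + (b : ℂ) ^ 2 * u z - (b : ℂ) * u z
        = -(z.im : ℂ) ^ 2 * (pdx (Wop b u) z - Complex.I * pdy (Wop b u) z)
          + Complex.I * (b : ℂ) * (z.im : ℂ) * Wop b u z := by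
  intro z hz
  have hS : IsOpen {w : ℂ | 0 < w.im} := isOpen_lt continuous_const Complex.continuous_im
  have hzS : {w : ℂ | 0 < w.im} ∈ nhds z := hS.mem_nhds hz
  have hu2 : ContDiffAt ℝ 2 u z := hu.contDiffAt hzS
  have hyR : z.im ≠ 0 := hz.ne'
  have hy : (z.im : ℂ) ≠ 0 := Complex.ofReal_ne_zero.2 hyR
  have hud : DifferentiableAt ℝ u z := hu2.differentiableAt (by norm_num)
  have hdf : DifferentiableAt ℝ (fderiv ℝ u) z :=
    (hu2.fderiv_right (m := 1) (by norm_num)).differentiableAt (by norm_num)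
  set A := fderiv ℝ (fderiv ℝ u) z with hA
  have hAz : HasFDerivAt (fderiv ℝ u) A z := hdf.hasFDerivAt
  have hsymm : ∀ v w : ℂ, A v w = A w v := hu2.isSymmSndFDerivAt (by simp)
  have h1 : HasFDerivAt (pdx u) ((fderiv ℝ u z).comp (0 : ℂ →L[ℝ] ℂ) + A.flip 1) z :=
    hAz.clm_apply (hasFDerivAt_const 1 z)
  have h2 : HasFDerivAt (pdy u) ((fderiv ℝ u z).comp (0 : ℂ →L[ℝ] ℂ) + A.flip Complex.I) z :=
    hAz.clm_apply (hasFDerivAt_const Complex.I z)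
  have hq := hasFDerivAt_im_inv hyR
  have hg := hq.const_mul (Complex.I * (b : ℂ))
  have h3 := hg.mul hud.hasFDerivAt
  have hWeq : Wop b u = fun w =>
      (pdx u w + Complex.I * pdy u w) -
        (Complex.I * (b : ℂ) * ((w.im : ℂ))⁻¹) * u w := by
    funext w
    simp only [Wop, div_eq_mul_inv]
    ring
  have hW := ((h1.add (h2.const_mul Complex.I)).sub h3)
  rw [show ((pdx u + fun y => Complex.I * pdy u y) - (fun y => Complex.I * (b : ℂ) * ((y.im : ℂ))⁻¹) * u) = Wop b u from hWeq.symm] at hW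
  have hpW := hW.fderiv
  have e1 : pdx (Wop b u) z = fderiv ℝ (Wop b u) z 1 := rfl
  have e2 : pdy (Wop b u) z = fderiv ℝ (Wop b u) z Complex.I := rfl
  have epdx2 : pdx (pdx u) z = A 1 1 := by
    show fderiv ℝ (pdx u) z 1 = A 1 1
    rw [h1.fderiv]
    simp
  have epdy2 : pdy (pdy u) z = A Complex.I Complex.I := by
    show fderiv ℝ (pdy u) z Complex.I = A Complex.I Complex.I
    rw [h2.fderiv]
    simp
  have eW1 : pdx (Wop b u) z = A 1 1 + Complex.I * A 1 Complex.I
      - Complex.I * (b : ℂ) * ((z.im : ℂ))⁻¹ * fderiv ℝ u z 1 := by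
    rw [e1, hpW]
    simp
  have eW2 : pdy (Wop b u) z = A Complex.I 1 + Complex.I * A Complex.I Complex.I
      - (Complex.I * (b : ℂ) * ((z.im : ℂ))⁻¹ * fderiv ℝ u z Complex.I
          - Complex.I * (b : ℂ) * (((z.im : ℂ)) ^ 2)⁻¹ * u z) := by
    rw [e2, hpW]
    simp
    push_cast
    ring
  have eWz : Wop b u z = fderiv ℝ u z 1 + Complex.I * fderiv ℝ u z Complex.I
      - Complex.I * ((b : ℂ) / (z.im : ℂ)) * u z := rfl
  have epx : pdx u z = fderiv ℝ u z 1 := rfl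
  rw [epdx2, epdy2, eW1, eW2, eWz, epx, hsymm Complex.I 1]
  rw [div_eq_mul_inv]
  field_simp [hy]
  ring_nf
  simp only [Complex.I_sq]
  ring
end

section
/- Let b ∈ ℝ and let u : ℍ → ℂ be smooth with compact support contained in the upper half-plane ℍ = {x + iy ∈ ℂ : y > 0}. Then ∫_ℍ (|∂ₓu − i·(b/y)·u|² + |∂_y u|²) dx dy ≥ b·∫_ℍ |u|²·y⁻² dx dy. -/
open Complex MeasureTheory

lemma norm_sq_eq' (w : ℂ) : ‖w‖^2 = w.re^2 + w.im^2 := by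
  rw [Complex.sq_norm, Complex.normSq_apply]; ring

lemma integral_pderiv_eq_zero {f : ℂ → ℝ} {v : ℂ} (hf : Differentiable ℝ f)
    (hc : Continuous (fun z => fderiv ℝ f z v)) (hs : HasCompactSupport f) :
    ∫ z : ℂ, fderiv ℝ f z v = 0 := by
  have h := integral_mul_fderiv_eq_neg_fderiv_mul_of_integrable
      (μ := volume) (f := fun _ : ℂ => (1:ℝ)) (g := f) (v := v)
      ?_ ?_ ?_ (fun x _ => differentiableAt_const (1:ℝ)) (fun x _ => hf x)
  · simpa [fderiv_fun_const] using h
  · simp only [fderiv_fun_const, Pi.zero_apply, ContinuousLinearMap.zero_apply, zero_mul]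
    exact integrable_zero _ _ _
  · simp only [one_mul]
    exact hc.integrable_of_hasCompactSupport
      ((hs.fderiv ℝ).mono (fun z hz => by
        simp only [Function.mem_support] at *
        exact fun h0 => hz (by simp [h0])))
  · simpa using hf.continuous.integrable_of_hasCompactSupport hs

lemma fderiv_im_conj_mul (u : ℂ → ℂ) (hu : ContDiff ℝ (⊤ : ℕ∞) u) (z v w : ℂ) :
    fderiv ℝ (fun z => ((starRingEnd ℂ) (u z) * fderiv ℝ u z w).im) z v
      = ((starRingEnd ℂ) (u z) * (fderiv ℝ (fderiv ℝ u) z v w)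
          + (fderiv ℝ u z w) * (starRingEnd ℂ) (fderiv ℝ u z v)).im := by
  have hud : Differentiable ℝ u := hu.differentiable (by simp)
  have hu' : ContDiff ℝ (⊤ : ℕ∞) (fderiv ℝ u) := hu.fderiv_right (by simp)
  have h1 : HasFDerivAt u (fderiv ℝ u z) z := (hud z).hasFDerivAt
  have hconj : HasFDerivAt (fun z => (starRingEnd ℂ) (u z))
      ((Complex.conjCLE.toContinuousLinearMap).comp (fderiv ℝ u z)) z :=
    (Complex.conjCLE.toContinuousLinearMap.hasFDerivAt).comp z h1
  have hpdw : HasFDerivAt (fun z => fderiv ℝ u z w)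
      (((fderiv ℝ u z).comp 0) + (fderiv ℝ (fderiv ℝ u) z).flip w) z :=
    ((hu'.differentiable (by simp) z).hasFDerivAt).clm_apply (hasFDerivAt_const w z)
  have hfinal : HasFDerivAt (fun z => ((starRingEnd ℂ) (u z) * fderiv ℝ u z w).im)
      (Complex.imCLM.comp
        ((starRingEnd ℂ) (u z) • ((fderiv ℝ u z).comp 0 + (fderiv ℝ (fderiv ℝ u) z).flip w) +
          (fderiv ℝ u z) w • (Complex.conjCLE.toContinuousLinearMap).comp (fderiv ℝ u z))) z :=
    (Complex.imCLM.hasFDerivAt).comp z (hconj.mul hpdw)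
  rw [hfinal.fderiv]
  simp [Complex.mul_im]

lemma fderiv_normSq_div_im (u : ℂ → ℂ) (hu : ContDiff ℝ (⊤ : ℕ∞) u) (b : ℝ) (z : ℂ)
    (hz : z.im ≠ 0) (v : ℂ) :
    fderiv ℝ (fun z => b * ‖u z‖^2 / z.im) z v
      = (z.im * (b * (2*((u z).re*(fderiv ℝ u z v).re + (u z).im*(fderiv ℝ u z v).im)))
          - b * ‖u z‖^2 * v.im) / z.im^2 := by
  have hud : Differentiable ℝ u := hu.differentiable (by simp)
  have h1 : HasFDerivAt u (fderiv ℝ u z) z := (hud z).hasFDerivAt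
  have hre : HasFDerivAt (fun z => (u z).re) (Complex.reCLM.comp (fderiv ℝ u z)) z :=
    (Complex.reCLM.hasFDerivAt).comp z h1
  have him : HasFDerivAt (fun z => (u z).im) (Complex.imCLM.comp (fderiv ℝ u z)) z :=
    (Complex.imCLM.hasFDerivAt).comp z h1
  have hN : HasFDerivAt (fun z => b * ‖u z‖^2)
      (b • ((u z).re • Complex.reCLM.comp (fderiv ℝ u z) + (u z).re • Complex.reCLM.comp (fderiv ℝ u z)
        + ((u z).im • Complex.imCLM.comp (fderiv ℝ u z) + (u z).im • Complex.imCLM.comp (fderiv ℝ u z)))) z := by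
    apply (((hre.fun_mul hre).fun_add (him.fun_mul him)).const_mul b).congr_of_eventuallyEq
    filter_upwards with w
    rw [norm_sq_eq']
    ring
  have hinv : HasFDerivAt (fun z : ℂ => (z.im)⁻¹)
      ((ContinuousLinearMap.smulRight (1 : ℝ →L[ℝ] ℝ) (-(z.im ^ 2)⁻¹)).comp (Complex.imCLM : ℂ →L[ℝ] ℝ)) z :=
    (hasFDerivAt_inv hz).comp z Complex.imCLM.hasFDerivAt
  have hDiv := hN.fun_mul hinv
  have hfun : (fun z : ℂ => b * ‖u z‖^2 / z.im) = fun z : ℂ => (b * ‖u z‖^2) * (z.im)⁻¹ := by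
    funext w; rw [div_eq_mul_inv]
  rw [hfun, hDiv.fderiv]
  simp [norm_sq_eq']
  field_simp
  ring

open Topology

lemma contDiff_norm_sq' (u : ℂ → ℂ) (hu : ContDiff ℝ (⊤ : ℕ∞) u) :
    ContDiff ℝ (⊤ : ℕ∞) (fun z => ‖u z‖^2) := by
  have : (fun z => ‖u z‖^2) = fun z => (u z).re*(u z).re + (u z).im*(u z).im := by
    funext w; rw [norm_sq_eq']; ring
  rw [this]
  exact ((Complex.reCLM.contDiff.comp hu).mul (Complex.reCLM.contDiff.comp hu)).add
    ((Complex.imCLM.contDiff.comp hu).mul (Complex.imCLM.contDiff.comp hu))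

lemma contDiff_conj_mul_pd (u : ℂ → ℂ) (hu : ContDiff ℝ (⊤ : ℕ∞) u) (w : ℂ) :
    ContDiff ℝ (⊤ : ℕ∞) (fun z => ((starRingEnd ℂ) (u z) * fderiv ℝ u z w).im) :=
  Complex.imCLM.contDiff.comp
    ((Complex.conjCLE.toContinuousLinearMap.contDiff.comp hu).mul
      ((hu.fderiv_right (by simp)).clm_apply contDiff_const))

noncomputable def Pf (u : ℂ → ℂ) (z : ℂ) : ℝ :=
  -((starRingEnd ℂ) (u z) * fderiv ℝ u z Complex.I).im

noncomputable def Qf (b : ℝ) (u : ℂ → ℂ) (z : ℂ) : ℝ :=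
  ((starRingEnd ℂ) (u z) * fderiv ℝ u z 1).im - b * ‖u z‖^2 / z.im

lemma key_pointwise (b : ℝ) (u : ℂ → ℂ) (hu : ContDiff ℝ (⊤ : ℕ∞) u)
    (hsub : tsupport u ⊆ {z : ℂ | 0 < z.im}) (z : ℂ) :
    ‖pdx u z - Complex.I * ((b : ℂ) / (z.im : ℂ)) * u z + Complex.I * pdy u z‖^2
        + b * (‖u z‖^2 / z.im^2)
      = (‖pdx u z - Complex.I * ((b : ℂ) / (z.im : ℂ)) * u z‖^2 + ‖pdy u z‖^2)
        + (fderiv ℝ (Pf u) z 1 + fderiv ℝ (Qf b u) z Complex.I) := by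
  by_cases hz : z ∈ tsupport u
  · have hy : 0 < z.im := hsub hz
    have hyne : z.im ≠ 0 := ne_of_gt hy
    have hP : fderiv ℝ (Pf u) z 1
        = -((starRingEnd ℂ) (u z) * (fderiv ℝ (fderiv ℝ u) z 1 Complex.I)
            + (fderiv ℝ u z Complex.I) * (starRingEnd ℂ) (fderiv ℝ u z 1)).im := by
      have h0 : Pf u = fun z => -((starRingEnd ℂ) (u z) * fderiv ℝ u z Complex.I).im := rfl
      rw [h0, fderiv_fun_neg]
      simp only [ContinuousLinearMap.neg_apply]
      rw [fderiv_im_conj_mul u hu z 1 Complex.I]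
    have hQ1d : DifferentiableAt ℝ (fun z => ((starRingEnd ℂ) (u z) * fderiv ℝ u z 1).im) z :=
      ((contDiff_conj_mul_pd u hu 1).differentiable (by simp)) z
    have hRd : DifferentiableAt ℝ (fun z => b * ‖u z‖^2 / z.im) z := by
      have h1 : DifferentiableAt ℝ (fun z => b * ‖u z‖^2) z :=
        (((contDiff_norm_sq' u hu).differentiable (by simp)) z).const_mul b
      have h2 : DifferentiableAt ℝ (fun z : ℂ => (z.im)⁻¹) z :=
        (differentiableAt_inv hyne).comp z (Complex.imCLM.differentiable z)
      have h3 : (fun z : ℂ => b * ‖u z‖^2 / z.im) = fun z : ℂ => (b * ‖u z‖^2) * (z.im)⁻¹ := by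
        funext w; rw [div_eq_mul_inv]
      rw [h3]
      exact h1.mul h2
    have hQ : fderiv ℝ (Qf b u) z Complex.I
        = ((starRingEnd ℂ) (u z) * (fderiv ℝ (fderiv ℝ u) z Complex.I 1)
            + (fderiv ℝ u z 1) * (starRingEnd ℂ) (fderiv ℝ u z Complex.I)).im
          - (z.im * (b * (2*((u z).re*(fderiv ℝ u z Complex.I).re + (u z).im*(fderiv ℝ u z Complex.I).im)))
              - b * ‖u z‖^2 * Complex.I.im) / z.im^2 := by
      have h0 : Qf b u = fun z => (fun z => ((starRingEnd ℂ) (u z) * fderiv ℝ u z 1).im) z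
          - (fun z => b * ‖u z‖^2 / z.im) z := rfl
      rw [h0, fderiv_fun_sub hQ1d hRd]
      simp only [ContinuousLinearMap.sub_apply]
      rw [fderiv_im_conj_mul u hu z Complex.I 1, fderiv_normSq_div_im u hu b z hyne Complex.I]
    have hsymm : fderiv ℝ (fderiv ℝ u) z Complex.I 1 = fderiv ℝ (fderiv ℝ u) z 1 Complex.I :=
      (hu.contDiffAt.isSymmSndFDerivAt (by rw [minSmoothness_of_isRCLikeNormedField]; exact WithTop.coe_le_coe.mpr le_top)) Complex.I 1
    rw [hP, hQ, hsymm]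
    rw [show ((b : ℂ) / (z.im : ℂ)) = (((b / z.im : ℝ)) : ℂ) from (Complex.ofReal_div b z.im).symm]
    simp only [pdx, pdy, norm_sq_eq', Complex.add_re, Complex.add_im, Complex.sub_re, Complex.sub_im,
      Complex.mul_re, Complex.mul_im, Complex.I_re, Complex.I_im, Complex.ofReal_re,
      Complex.ofReal_im, Complex.conj_re, Complex.conj_im, Complex.one_re, Complex.one_im]
    field_simp
    ring
  · have hev : ∀ᶠ w in 𝓝 z, u w = 0 :=
      Filter.eventually_of_mem ((isClosed_tsupport u).isOpen_compl.mem_nhds hz)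
        (fun w hw => image_eq_zero_of_notMem_tsupport hw)
    have hu0 : u =ᶠ[𝓝 z] (fun _ => 0) := hev
    have hfz : fderiv ℝ u z = 0 := by
      rw [hu0.fderiv_eq]; exact fderiv_const_apply 0
    have hP0 : Pf u =ᶠ[𝓝 z] (fun _ => 0) := by
      filter_upwards [hev] with w hw
      simp [Pf, hw]
    have hQ0 : Qf b u =ᶠ[𝓝 z] (fun _ => 0) := by
      filter_upwards [hev] with w hw
      simp [Qf, hw]
    have hz0 : u z = 0 := image_eq_zero_of_notMem_tsupport hz
    have h1 : fderiv ℝ (Pf u) z = 0 := by rw [hP0.fderiv_eq]; exact fderiv_const_apply 0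
    have h2 : fderiv ℝ (Qf b u) z = 0 := by rw [hQ0.fderiv_eq]; exact fderiv_const_apply 0
    simp [pdx, pdy, hfz, hz0, h1, h2]

lemma hcs_of_subset {β : Type*} [Zero β] {u : ℂ → ℂ} {f : ℂ → β}
    (hsupp : HasCompactSupport u) (h : ∀ z, z ∉ tsupport u → f z = 0) :
    HasCompactSupport f := by
  apply IsCompact.of_isClosed_subset hsupp isClosed_closure
  apply closure_minimal ?_ (isClosed_tsupport u)
  intro z hz
  by_contra hzc
  exact (Function.mem_support.mp hz) (h z hzc)

lemma fderiv_zero_of_nmem {u : ℂ → ℂ} {z : ℂ} (hz : z ∉ tsupport u) : fderiv ℝ u z = 0 := by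
  by_contra h
  exact hz (support_fderiv_subset ℝ (Function.mem_support.mpr h))

/-- The local quadratic-form content of Theorem 3.1(b): `−Δ_{a^b} ≥ b`.
For smooth `u` compactly supported in the upper half-plane,
`∫ (|∂ₓ u − i (b/y) u|² + |∂_y u|²) dx dy ≥ b ∫ |u|² y⁻² dx dy`. -/
theorem magnetic_laplacian_ge_b_quadratic_form
    (b : ℝ) (u : ℂ → ℂ)
    (hu : ContDiff ℝ (⊤ : ℕ∞) u) (hsupp : HasCompactSupport u)
    (hsub : tsupport u ⊆ {z : ℂ | 0 < z.im}) :
    ∫ z : ℂ, (‖pdx u z - Complex.I * ((b : ℂ) / (z.im : ℂ)) * u z‖ ^ 2 + ‖pdy u z‖ ^ 2)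
      ≥ b * ∫ z : ℂ, ‖u z‖ ^ 2 / z.im ^ 2 := by
  have hpdxc : Continuous (pdx u) := by
    have : ContDiff ℝ (⊤ : ℕ∞) (fun z => fderiv ℝ u z 1) :=
      (hu.fderiv_right (by simp)).clm_apply contDiff_const
    exact this.continuous
  have hpdyc : Continuous (pdy u) := by
    have : ContDiff ℝ (⊤ : ℕ∞) (fun z => fderiv ℝ u z Complex.I) :=
      (hu.fderiv_right (by simp)).clm_apply contDiff_const
    exact this.continuous
  -- continuity of the magnetic derivative A
  have hAc : Continuous (fun z => pdx u z - Complex.I * ((b : ℂ) / (z.im : ℂ)) * u z) := by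
    rw [continuous_iff_continuousAt]
    intro z
    by_cases hz : z ∈ tsupport u
    · have hy : (z.im : ℂ) ≠ 0 := by
        exact_mod_cast (ne_of_gt (hsub hz))
      apply ContinuousAt.sub hpdxc.continuousAt
      apply ContinuousAt.mul ?_ hu.continuous.continuousAt
      apply ContinuousAt.mul continuousAt_const
      exact ContinuousAt.div continuousAt_const
        ((Complex.continuous_ofReal.comp Complex.continuous_im).continuousAt) hy
    · apply Filter.EventuallyEq.continuousAt (y := (0:ℂ))
      filter_upwards [(isClosed_tsupport u).isOpen_compl.mem_nhds hz] with w hw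
      have h1 : u w = 0 := image_eq_zero_of_notMem_tsupport hw
      have h2 : fderiv ℝ u w = 0 := fderiv_zero_of_nmem hw
      simp [pdx, h1, h2]
  -- continuity of the weight function
  have hF2c : Continuous (fun z : ℂ => ‖u z‖ ^ 2 / z.im ^ 2) := by
    rw [continuous_iff_continuousAt]
    intro z
    by_cases hz : z ∈ tsupport u
    · have hy : z.im ^ 2 ≠ 0 := pow_ne_zero 2 (ne_of_gt (hsub hz))
      exact ContinuousAt.div ((contDiff_norm_sq' u hu).continuous.continuousAt)
        ((Complex.continuous_im.pow 2).continuousAt) hy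
    · apply Filter.EventuallyEq.continuousAt (y := (0:ℝ))
      filter_upwards [(isClosed_tsupport u).isOpen_compl.mem_nhds hz] with w hw
      simp [image_eq_zero_of_notMem_tsupport hw]
  -- integrabilities
  have hAval0 : ∀ z, z ∉ tsupport u →
      pdx u z - Complex.I * ((b : ℂ) / (z.im : ℂ)) * u z = 0 := by
    intro z hz
    simp [pdx, image_eq_zero_of_notMem_tsupport hz, fderiv_zero_of_nmem hz]
  have hgval0 : ∀ z, z ∉ tsupport u → pdy u z = 0 := by
    intro z hz
    simp [pdy, fderiv_zero_of_nmem hz]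
  have intF1 : Integrable (fun z : ℂ =>
      ‖pdx u z - Complex.I * ((b : ℂ) / (z.im : ℂ)) * u z‖ ^ 2 + ‖pdy u z‖ ^ 2) := by
    apply Continuous.integrable_of_hasCompactSupport
    · exact ((hAc.norm.pow 2).add (hpdyc.norm.pow 2))
    · exact hcs_of_subset hsupp (fun z hz => by simp [hAval0 z hz, hgval0 z hz])
  have intF2 : Integrable (fun z : ℂ => ‖u z‖ ^ 2 / z.im ^ 2) := by
    apply hF2c.integrable_of_hasCompactSupport
    exact hcs_of_subset hsupp (fun z hz => by simp [image_eq_zero_of_notMem_tsupport hz])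
  have intF3 : Integrable (fun z : ℂ =>
      ‖pdx u z - Complex.I * ((b : ℂ) / (z.im : ℂ)) * u z + Complex.I * pdy u z‖ ^ 2) := by
    apply Continuous.integrable_of_hasCompactSupport
    · exact ((hAc.add (continuous_const.mul hpdyc)).norm.pow 2)
    · exact hcs_of_subset hsupp (fun z hz => by simp [hAval0 z hz, hgval0 z hz])
  -- P and Q are C¹ with compact support
  have hPc : ContDiff ℝ (⊤ : ℕ∞) (Pf u) := (contDiff_conj_mul_pd u hu Complex.I).neg
  have hPs : HasCompactSupport (Pf u) :=
    hcs_of_subset hsupp (fun z hz => by simp [Pf, image_eq_zero_of_notMem_tsupport hz])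
  have hQc : ContDiff ℝ 1 (Qf b u) := by
    rw [contDiff_iff_contDiffAt]
    intro z
    by_cases hz : z ∈ tsupport u
    · have hy : z.im ≠ 0 := ne_of_gt (hsub hz)
      have e1 : ContDiffAt ℝ 1 (fun z => ((starRingEnd ℂ) (u z) * fderiv ℝ u z 1).im) z :=
        ((contDiff_conj_mul_pd u hu 1).of_le (by simp)).contDiffAt
      have e2 : ContDiffAt ℝ 1 (fun z : ℂ => b * ‖u z‖^2 / z.im) z := by
        have h3 : (fun z : ℂ => b * ‖u z‖^2 / z.im) = fun z : ℂ => (b * ‖u z‖^2) * (z.im)⁻¹ := by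
          funext w; rw [div_eq_mul_inv]
        rw [h3]
        exact (contDiffAt_const.mul (((contDiff_norm_sq' u hu).of_le (by simp)).contDiffAt)).mul
          ((Complex.imCLM.contDiff.contDiffAt).inv hy)
      exact e1.sub e2
    · apply ContDiffAt.congr_of_eventuallyEq (contDiffAt_const (c := (0:ℝ)))
      filter_upwards [(isClosed_tsupport u).isOpen_compl.mem_nhds hz] with w hw
      simp [Qf, image_eq_zero_of_notMem_tsupport hw]
  have hQs : HasCompactSupport (Qf b u) :=
    hcs_of_subset hsupp (fun z hz => by simp [Qf, image_eq_zero_of_notMem_tsupport hz])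
  -- divergence integrals vanish
  have hPcont : Continuous (fun z => fderiv ℝ (Pf u) z 1) :=
    ((hPc.of_le (by simp)).continuous_fderiv one_ne_zero).clm_apply continuous_const
  have hQcont : Continuous (fun z => fderiv ℝ (Qf b u) z Complex.I) :=
    (hQc.continuous_fderiv one_ne_zero).clm_apply continuous_const
  have intDP : Integrable (fun z => fderiv ℝ (Pf u) z 1) := by
    apply hPcont.integrable_of_hasCompactSupport
    apply hcs_of_subset hsupp
    intro z hz
    have : fderiv ℝ (Pf u) z = 0 := by
      by_contra h
      have h1 := support_fderiv_subset ℝ (Function.mem_support.mpr h)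
      have h2 : tsupport (Pf u) ⊆ tsupport u := by
        apply closure_minimal ?_ (isClosed_tsupport u)
        intro w hw
        by_contra hwc
        exact (Function.mem_support.mp hw) (by simp [Pf, image_eq_zero_of_notMem_tsupport hwc])
      exact hz (h2 h1)
    simp [this]
  have intDQ : Integrable (fun z => fderiv ℝ (Qf b u) z Complex.I) := by
    apply hQcont.integrable_of_hasCompactSupport
    apply hcs_of_subset hsupp
    intro z hz
    have : fderiv ℝ (Qf b u) z = 0 := by
      by_contra h
      have h1 := support_fderiv_subset ℝ (Function.mem_support.mpr h)
      have h2 : tsupport (Qf b u) ⊆ tsupport u := by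
        apply closure_minimal ?_ (isClosed_tsupport u)
        intro w hw
        by_contra hwc
        exact (Function.mem_support.mp hw) (by simp [Qf, image_eq_zero_of_notMem_tsupport hwc])
      exact hz (h2 h1)
    simp [this]
  have hIP : ∫ z : ℂ, fderiv ℝ (Pf u) z 1 = 0 :=
    integral_pderiv_eq_zero ((hPc.of_le (by simp)).differentiable one_ne_zero) hPcont hPs
  have hIQ : ∫ z : ℂ, fderiv ℝ (Qf b u) z Complex.I = 0 :=
    integral_pderiv_eq_zero (hQc.differentiable one_ne_zero) hQcont hQs
  -- assembly
  have h0 : (∫ z : ℂ, ‖pdx u z - Complex.I * ((b : ℂ) / (z.im : ℂ)) * u z + Complex.I * pdy u z‖ ^ 2)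
      + b * (∫ z : ℂ, ‖u z‖ ^ 2 / z.im ^ 2)
      = ∫ z : ℂ, (‖pdx u z - Complex.I * ((b : ℂ) / (z.im : ℂ)) * u z‖ ^ 2 + ‖pdy u z‖ ^ 2) := by
    rw [← integral_const_mul, ← integral_add intF3 (intF2.const_mul b)]
    have : ∫ z : ℂ, (‖pdx u z - Complex.I * ((b : ℂ) / (z.im : ℂ)) * u z + Complex.I * pdy u z‖ ^ 2
        + b * (‖u z‖ ^ 2 / z.im ^ 2))
        = ∫ z : ℂ, ((‖pdx u z - Complex.I * ((b : ℂ) / (z.im : ℂ)) * u z‖ ^ 2 + ‖pdy u z‖ ^ 2)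
          + (fderiv ℝ (Pf u) z 1 + fderiv ℝ (Qf b u) z Complex.I)) := by
      apply integral_congr_ae
      filter_upwards with z
      exact key_pointwise b u hu hsub z
    have intD : Integrable (fun z => fderiv ℝ (Pf u) z 1 + fderiv ℝ (Qf b u) z Complex.I) volume :=
      intDP.add intDQ
    rw [this, integral_add intF1 intD, integral_add intDP intDQ, hIP, hIQ]
    simp
  have h3 : (0:ℝ) ≤ ∫ z : ℂ, ‖pdx u z - Complex.I * ((b : ℂ) / (z.im : ℂ)) * u z + Complex.I * pdy u z‖ ^ 2 :=
    integral_nonneg (fun z => by positivity)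
  linarith [h0, h3]
end

section
/- Let b ∈ ℝ. The function u : ℍ → ℂ defined on the upper half-plane ℍ = {x + iy ∈ ℂ : y > 0} by u(x + iy) = y^b · e^{2πi(x + iy)} (= y^b e^{2πix} e^{−2πy}) satisfies −y²(∂ₓₓu + ∂_yy u) + 2i·b·y·∂ₓu + b²·u = b·u at every point of ℍ. -/
open Complex Real

noncomputable def Eb (w : ℂ) : ℂ := Complex.exp (2 * Real.pi * Complex.I * w)

noncomputable def g (c : ℝ) (w : ℂ) : ℂ := ((w.im ^ c : ℝ) : ℂ) * Eb w

lemma hE (w : ℂ) : HasFDerivAt Eb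
    (((1 : ℂ →L[ℂ] ℂ).smulRight (2 * (Real.pi : ℂ) * Complex.I * Eb w)).restrictScalars ℝ) w := by
  have h : HasDerivAt Eb (2 * (Real.pi : ℂ) * Complex.I * Eb w) w := by
    unfold Eb
    simpa [mul_comm] using ((hasDerivAt_id w).const_mul (2 * (Real.pi : ℂ) * Complex.I)).cexp
  exact h.hasFDerivAt.restrictScalars ℝ

lemma hg {c : ℝ} {z : ℂ} (hz : z.im ≠ 0) :
    HasFDerivAt (g c)
      (((z.im ^ c : ℝ) : ℂ) •
          (((1 : ℂ →L[ℂ] ℂ).smulRight (2 * (Real.pi : ℂ) * Complex.I * Eb z)).restrictScalars ℝ)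
        + Eb z • (Complex.ofRealCLM.comp ((c * z.im ^ (c - 1)) • Complex.imCLM))) z := by
  have h1 : HasFDerivAt (fun w : ℂ => w.im ^ c) ((c * z.im ^ (c - 1)) • Complex.imCLM) z := by
    have := (Real.hasDerivAt_rpow_const (p := c) (Or.inl hz)).comp_hasFDerivAt z
      Complex.imCLM.hasFDerivAt
    simpa [Function.comp_def] using this
  have hP : HasFDerivAt (fun w : ℂ => ((w.im ^ c : ℝ) : ℂ))
      (Complex.ofRealCLM.comp ((c * z.im ^ (c - 1)) • Complex.imCLM)) z :=
    Complex.ofRealCLM.hasFDerivAt.comp z h1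
  have := hP.mul (hE z)
  exact this

lemma pdx_g {c : ℝ} {z : ℂ} (hz : z.im ≠ 0) :
    pdx (g c) z = 2 * (Real.pi : ℂ) * Complex.I * g c z := by
  rw [pdx, (hg hz).fderiv]
  simp [g]
  ring

lemma pdy_g {c : ℝ} {z : ℂ} (hz : z.im ≠ 0) :
    pdy (g c) z = (c : ℂ) * g (c - 1) z - 2 * (Real.pi : ℂ) * g c z := by
  rw [pdy, (hg hz).fderiv]
  simp [g, Complex.I_mul_I]
  ring_nf
  rw [Complex.I_sq]
  ring

/-- The building block of the Poincaré series of Proposition 3.2: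
`u (x + iy) = y^b e^{2πi(x+iy)}` satisfies `L_b u = b u` on the upper half-plane, where
`L_b = −y²(∂ₓₓ + ∂_yy) + 2 i b y ∂ₓ + b²` is the magnetic Laplacian at field strength `b`. -/
theorem poincare_series_seed_eigenfunction (b : ℝ) (u : ℂ → ℂ)
    (hu : u = fun w : ℂ => ((w.im ^ b : ℝ) : ℂ) * Complex.exp (2 * Real.pi * Complex.I * w)) :
    ∀ z : ℂ, 0 < z.im →
      -(z.im : ℂ) ^ 2 * (pdx (pdx u) z + pdy (pdy u) z)
          + 2 * Complex.I * (b : ℂ) * (z.im : ℂ) * pdx u z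
          + (b : ℂ) ^ 2 * u z
        = (b : ℂ) * u z := by
  have hufun : u = g b := by rw [hu]; rfl
  subst hufun
  intro z hz
  have hz' : z.im ≠ 0 := ne_of_gt hz
  have hmem : {w : ℂ | w.im ≠ 0} ∈ nhds z :=
    (isOpen_compl_singleton.preimage Complex.continuous_im).mem_nhds hz'
  -- first derivatives, eventually
  have hEx : pdx (g b) =ᶠ[nhds z] fun w => 2 * (Real.pi : ℂ) * Complex.I * g b w :=
    Filter.eventuallyEq_of_mem hmem fun w hw => pdx_g hw
  have hEy : pdy (g b) =ᶠ[nhds z] fun w =>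
      (b : ℂ) * g (b - 1) w - 2 * (Real.pi : ℂ) * g b w :=
    Filter.eventuallyEq_of_mem hmem fun w hw => pdy_g hw
  -- second derivatives
  have e_xx : pdx (pdx (g b)) z
      = 2 * (Real.pi : ℂ) * Complex.I * (2 * (Real.pi : ℂ) * Complex.I * g b z) := by
    have hD : HasFDerivAt (fun w => 2 * (Real.pi : ℂ) * Complex.I * g b w)
        ((2 * (Real.pi : ℂ) * Complex.I) • _) z := (hg hz').const_mul _
    rw [pdx, hEx.fderiv_eq, hD.fderiv, ContinuousLinearMap.smul_apply, smul_eq_mul,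
      ← (hg hz').fderiv]
    rw [show (fderiv ℝ (g b) z) 1 = pdx (g b) z from rfl, pdx_g hz']
  have e_yy : pdy (pdy (g b)) z
      = (b : ℂ) * ((((b : ℝ) - 1 : ℝ) : ℂ) * g (b - 1 - 1) z - 2 * (Real.pi : ℂ) * g (b - 1) z)
        - 2 * (Real.pi : ℂ) * ((b : ℂ) * g (b - 1) z - 2 * (Real.pi : ℂ) * g b z) := by
    have hD : HasFDerivAt (fun w => (b : ℂ) * g (b - 1) w - 2 * (Real.pi : ℂ) * g b w)
        (((b : ℂ) • _) - ((2 * (Real.pi : ℂ)) • _)) z :=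
      ((hg (c := b - 1) hz').const_mul _).sub ((hg (c := b) hz').const_mul _)
    rw [pdy, hEy.fderiv_eq, hD.fderiv, ContinuousLinearMap.sub_apply,
      ContinuousLinearMap.smul_apply, ContinuousLinearMap.smul_apply, smul_eq_mul, smul_eq_mul,
      ← (hg (c := b - 1) hz').fderiv, ← (hg (c := b) hz').fderiv]
    rw [show (fderiv ℝ (g (b - 1)) z) Complex.I = pdy (g (b - 1)) z from rfl,
      show (fderiv ℝ (g b) z) Complex.I = pdy (g b) z from rfl, pdy_g hz', pdy_g hz']
  -- algebraic identities  y * y^(c-1) = y^c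
  have hyc : ∀ c : ℝ, (z.im : ℂ) * g (c - 1) z = g c z := by
    intro c
    have hne : (z.im : ℂ) ≠ 0 := Complex.ofReal_ne_zero.mpr hz'
    simp only [g]
    rw [Real.rpow_sub_one hz']
    push_cast
    field_simp
  have hy1 : (z.im : ℂ) * g (b - 1) z = g b z := hyc b
  have hy2 : (z.im : ℂ) ^ 2 * g (b - 1 - 1) z = g b z := by
    rw [pow_two, mul_assoc, hyc (b - 1), hyc b]
  rw [e_xx, e_yy, pdx_g hz']
  linear_combination (norm := (push_cast; ring1)) (-4 * (Real.pi : ℂ) ^ 2 * (z.im : ℂ) ^ 2 * g b z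
      + 4 * (Real.pi : ℂ) * (b : ℂ) * (z.im : ℂ) * g b z) * Complex.I_sq
    + (4 * (Real.pi : ℂ) * (b : ℂ) * (z.im : ℂ)) * hy1
    + (-((b : ℂ) * ((b : ℂ) - 1))) * hy2
end

section
/- Let d be a positive integer, κ > 0, b > 0, and let B be an invertible real d×d matrix. Let V ⊆ ℝ × ℝ^d × ℝ be an open neighborhood of (0, 0, b/κ²), and let R_ψ : V → ℝ and R_α : V → ℝ^d be C² functions such that for some constant C > 0: |R_ψ(s, t, r)| ≤ C(‖t‖ + s²) and ‖R_α(s, t, r)‖ ≤ C(‖t‖² + s²) for all (s, t, r) ∈ V, and all first-order partial derivatives of R_ψ (respectively R_α) satisfy the same bound C(‖t‖ + s²) (respectively C(‖t‖² + s²)) on V. Then there exist ε > 0 and C¹ functions t : (−ε, ε) → ℝ^d and r : (−ε, ε) → ℝ with t(0) = 0 and r(0) = b/κ², such that for every |s| < ε: κ²·r(s) − b + R_ψ(s, t(s), r(s)) = 0 and B·t(s) + R_α(s, t(s), r(s)) = 0; the solution is unique in the sense that there is a neighborhood U of (0, b/κ²) in ℝ^d × ℝ such that for each |s| < ε, (t(s),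 r(s)) is the only solution of this system in U; moreover ‖t(s)‖ = O(s²) and |r(s) − b/κ²| = O(s²) as s → 0. -/
open Matrix Filter Set
open scoped ContDiff Topology

set_option maxHeartbeats 2000000 in
/-- The abstract finite-dimensional content of Lemma 5.1 (Lemma D.1) of the paper,
solving the reduced bifurcation equations
`κ² r − b + R_ψ (s, t, r) = 0` and `B t + R_α (s, t, r) = 0`
near `(s, t, r) = (0, 0, b/κ²)` for an invertible matrix `B` and `C²` remainders obeying
the stated size estimates (together with the same estimates on their derivatives). -/
theorem reduced_bifurcation_equations_solution
    (d : ℕ) (hd : 0 < d) (κ b : ℝ) (hκ : 0 < κ) (hb : 0 < b)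
    (B : Matrix (Fin d) (Fin d) ℝ) (hB : IsUnit B)
    (V : Set (ℝ × EuclideanSpace ℝ (Fin d) × ℝ)) (hVopen : IsOpen V)
    (hV0 : ((0 : ℝ), (0 : EuclideanSpace ℝ (Fin d)), b / κ ^ 2) ∈ V)
    (Rψ : ℝ × EuclideanSpace ℝ (Fin d) × ℝ → ℝ)
    (Rα : ℝ × EuclideanSpace ℝ (Fin d) × ℝ → EuclideanSpace ℝ (Fin d))
    (hRψ : ContDiffOn ℝ 2 Rψ V) (hRα : ContDiffOn ℝ 2 Rα V)
    (C : ℝ) (hC : 0 < C)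
    (hRψbound : ∀ p ∈ V, |Rψ p| ≤ C * (‖p.2.1‖ + p.1 ^ 2))
    (hRαbound : ∀ p ∈ V, ‖Rα p‖ ≤ C * (‖p.2.1‖ ^ 2 + p.1 ^ 2))
    (hRψderiv : ∀ p ∈ V, ‖fderiv ℝ Rψ p‖ ≤ C * (‖p.2.1‖ + p.1 ^ 2))
    (hRαderiv : ∀ p ∈ V, ‖fderiv ℝ Rα p‖ ≤ C * (‖p.2.1‖ ^ 2 + p.1 ^ 2)) :
    ∃ ε : ℝ, 0 < ε ∧
      ∃ (t : ℝ → EuclideanSpace ℝ (Fin d)) (r : ℝ → ℝ),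
        ContDiffOn ℝ 1 t (Set.Ioo (-ε) ε) ∧ ContDiffOn ℝ 1 r (Set.Ioo (-ε) ε) ∧
        t 0 = 0 ∧ r 0 = b / κ ^ 2 ∧
        (∀ s : ℝ, |s| < ε →
          (s, t s, r s) ∈ V ∧
          κ ^ 2 * r s - b + Rψ (s, t s, r s) = 0 ∧
          Matrix.toEuclideanLin B (t s) + Rα (s, t s, r s) = 0) ∧
        (∃ U : Set (EuclideanSpace ℝ (Fin d) × ℝ), IsOpen U ∧
          ((0 : EuclideanSpace ℝ (Fin d)), b / κ ^ 2) ∈ U ∧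
          ∀ s : ℝ, |s| < ε → ∀ (t' : EuclideanSpace ℝ (Fin d)) (r' : ℝ),
            (t', r') ∈ U → (s, t', r') ∈ V →
            κ ^ 2 * r' - b + Rψ (s, t', r') = 0 →
            Matrix.toEuclideanLin B t' + Rα (s, t', r') = 0 →
            t' = t s ∧ r' = r s) ∧
        (∃ C' : ℝ, 0 < C' ∧ ∀ s : ℝ, |s| < ε →
          ‖t s‖ ≤ C' * s ^ 2 ∧ |r s - b / κ ^ 2| ≤ C' * s ^ 2) := by
  classical
  have hκ2 : (κ : ℝ) ^ 2 ≠ 0 := pow_ne_zero 2 hκ.ne'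
  have hκ2pos : (0 : ℝ) < κ ^ 2 := by positivity
  have hBdet : IsUnit B.det := (Matrix.isUnit_iff_isUnit_det B).mp hB
  have hLinv : ∀ x : EuclideanSpace ℝ (Fin d),
      Matrix.toEuclideanLin B⁻¹ (Matrix.toEuclideanLin B x) = x := by
    intro x
    simp [Matrix.toEuclideanLin_apply, Matrix.mulVec_mulVec, Matrix.nonsing_inv_mul B hBdet]
  have hLinv' : ∀ x : EuclideanSpace ℝ (Fin d),
      Matrix.toEuclideanLin B (Matrix.toEuclideanLin B⁻¹ x) = x := by
    intro x
    simp [Matrix.toEuclideanLin_apply, Matrix.mulVec_mulVec, Matrix.mul_nonsing_inv B hBdet]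
  set p₀ : ℝ × EuclideanSpace ℝ (Fin d) × ℝ := (0, 0, b / κ ^ 2) with hp₀def
  let Lequiv : EuclideanSpace ℝ (Fin d) ≃ₗ[ℝ] EuclideanSpace ℝ (Fin d) :=
    LinearEquiv.ofLinear (Matrix.toEuclideanLin B) (Matrix.toEuclideanLin B⁻¹)
      (LinearMap.ext hLinv') (LinearMap.ext hLinv)
  let Aeq : (ℝ × EuclideanSpace ℝ (Fin d) × ℝ) ≃ₗ[ℝ] (ℝ × EuclideanSpace ℝ (Fin d) × ℝ) :=
    (LinearEquiv.refl ℝ ℝ).prodCongr (Lequiv.prodCongr (LinearEquiv.smulOfNeZero ℝ ℝ (κ ^ 2) hκ2))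
  let A := Aeq.toContinuousLinearEquiv
  have hAapply : ∀ p : ℝ × EuclideanSpace ℝ (Fin d) × ℝ,
      A p = (p.1, Matrix.toEuclideanLin B p.2.1, κ ^ 2 * p.2.2) := fun p => rfl
  set G : (ℝ × EuclideanSpace ℝ (Fin d) × ℝ) → (ℝ × EuclideanSpace ℝ (Fin d) × ℝ) :=
    fun p => (p.1, Matrix.toEuclideanLin B p.2.1 + Rα p, κ ^ 2 * p.2.2 - b + Rψ p) with hGdef
  have hVmem : V ∈ 𝓝 p₀ := hVopen.mem_nhds hV0
  have hRψ0 : Rψ p₀ = 0 := by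
    have h := hRψbound p₀ hV0
    have h2 : |Rψ p₀| ≤ 0 := by simpa [hp₀def] using h
    exact abs_nonpos_iff.mp h2
  have hRα0 : Rα p₀ = 0 := by
    have h := hRαbound p₀ hV0
    have h2 : ‖Rα p₀‖ ≤ 0 := by simpa [hp₀def] using h
    exact norm_le_zero_iff.mp h2
  have hGp₀ : G p₀ = ((0 : ℝ), (0 : EuclideanSpace ℝ (Fin d)), (0 : ℝ)) := by
    have hbb : κ ^ 2 * (b / κ ^ 2) - b = 0 := by field_simp; ring
    simp only [hGdef]
    rw [hRψ0, hRα0]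
    simp [hp₀def, hbb]
  have hRψat : ContDiffAt ℝ 2 Rψ p₀ := hRψ.contDiffAt hVmem
  have hRαat : ContDiffAt ℝ 2 Rα p₀ := hRα.contDiffAt hVmem
  have hdψ : HasFDerivAt Rψ (0 : (ℝ × EuclideanSpace ℝ (Fin d) × ℝ) →L[ℝ] ℝ) p₀ := by
    have hdiff : DifferentiableAt ℝ Rψ p₀ := hRψat.differentiableAt two_ne_zero
    have h0 : fderiv ℝ Rψ p₀ = 0 := by
      have h := hRψderiv p₀ hV0
      have h2 : ‖fderiv ℝ Rψ p₀‖ ≤ 0 := by simpa [hp₀def] using h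
      exact norm_le_zero_iff.mp h2
    exact h0 ▸ hdiff.hasFDerivAt
  have hdα : HasFDerivAt Rα
      (0 : (ℝ × EuclideanSpace ℝ (Fin d) × ℝ) →L[ℝ] EuclideanSpace ℝ (Fin d)) p₀ := by
    have hdiff : DifferentiableAt ℝ Rα p₀ := hRαat.differentiableAt two_ne_zero
    have h0 : fderiv ℝ Rα p₀ = 0 := by
      have h := hRαderiv p₀ hV0
      have h2 : ‖fderiv ℝ Rα p₀‖ ≤ 0 := by simpa [hp₀def] using h
      exact norm_le_zero_iff.mp h2
    exact h0 ▸ hdiff.hasFDerivAt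
  have hN : HasFDerivAt
      (fun p : ℝ × EuclideanSpace ℝ (Fin d) × ℝ => (((0 : ℝ), Rα p, Rψ p + -b) :
        ℝ × EuclideanSpace ℝ (Fin d) × ℝ))
      (0 : (ℝ × EuclideanSpace ℝ (Fin d) × ℝ) →L[ℝ] (ℝ × EuclideanSpace ℝ (Fin d) × ℝ)) p₀ := by
    have h := HasFDerivAt.prodMk (hasFDerivAt_const (0 : ℝ) p₀) (HasFDerivAt.prodMk hdα (hdψ.add_const (-b)))
    exact h.congr_fderiv (by ext <;> simp)
  have hGeq : G = fun p => A p + (((0 : ℝ), Rα p, Rψ p + -b) :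
      ℝ × EuclideanSpace ℝ (Fin d) × ℝ) := by
    funext p
    simp only [hGdef, hAapply, Prod.mk_add_mk, Prod.mk.injEq]
    refine ⟨by ring, ?_, by ring⟩
    trivial
  have hG' : HasFDerivAt G
      (A : (ℝ × EuclideanSpace ℝ (Fin d) × ℝ) →L[ℝ] (ℝ × EuclideanSpace ℝ (Fin d) × ℝ)) p₀ := by
    have h := (A.hasFDerivAt (x := p₀)).add hN
    rw [add_zero] at h
    rw [hGeq]
    exact h
  have hlin2 : ContDiff ℝ 2 (fun p : ℝ × EuclideanSpace ℝ (Fin d) × ℝ =>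
      Matrix.toEuclideanLin B p.2.1) := by
    have h := (LinearMap.toContinuousLinearMap (Matrix.toEuclideanLin B)).contDiff (n := 2)
    have h2 := h.comp ((contDiff_fst.comp contDiff_snd :
      ContDiff ℝ 2 (fun p : ℝ × EuclideanSpace ℝ (Fin d) × ℝ => p.2.1)))
    exact h2
  have hGcd : ContDiffAt ℝ 2 G p₀ := by
    simp only [hGdef]
    exact ContDiffAt.prodMk contDiffAt_fst ((hlin2.contDiffAt.add hRαat).prodMk
      ((((contDiff_const.mul (contDiff_snd.comp contDiff_snd)).sub contDiff_const).contDiffAt).add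
        hRψat))
  have hn : (2 : WithTop ℕ∞) ≠ 0 := two_ne_zero
  have hs := hGcd.hasStrictFDerivAt' hG' hn
  set H : (ℝ × EuclideanSpace ℝ (Fin d) × ℝ) → (ℝ × EuclideanSpace ℝ (Fin d) × ℝ) :=
    HasStrictFDerivAt.localInverse G A p₀ hs with hHdef
  have hHsm : ContDiffAt ℝ 2 H (G p₀) := hGcd.to_localInverse hG' hn
  rw [hGp₀] at hHsm
  set Φ : ℝ → ℝ × EuclideanSpace ℝ (Fin d) × ℝ := fun s => H (s, 0, 0) with hΦdef
  have hΦ0 : Φ 0 = p₀ := by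
    have h := HasStrictFDerivAt.localInverse_apply_image (f := G) (f' := A) (a := p₀) hs
    rw [hGp₀] at h
    exact h
  have hctend : Tendsto (fun s : ℝ => ((s, 0, 0) : ℝ × EuclideanSpace ℝ (Fin d) × ℝ))
      (𝓝 0) (𝓝 (G p₀)) := by
    rw [hGp₀]
    exact (continuous_id.prodMk continuous_const).tendsto 0
  have hΦtend : Tendsto Φ (𝓝 0) (𝓝 p₀) :=
    (HasStrictFDerivAt.localInverse_tendsto hs).comp hctend
  have hcsm : ContDiffAt ℝ 2 (fun s : ℝ => ((s, 0, 0) : ℝ × EuclideanSpace ℝ (Fin d) × ℝ)) 0 :=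
    (contDiff_id.prodMk contDiff_const).contDiffAt
  have hΦsm : ContDiffAt ℝ 2 Φ 0 :=
    ContDiffAt.comp (g := H)
      (f := fun s : ℝ => ((s, 0, 0) : ℝ × EuclideanSpace ℝ (Fin d) × ℝ)) 0 hHsm hcsm
  set LMclm := LinearMap.toContinuousLinearMap (Matrix.toEuclideanLin (B⁻¹)) with hLMdef
  set K : ℝ := ‖LMclm‖ * C + 1 with hKdef
  have hK : 0 < K := by positivity
  have ev1 : ∀ᶠ s in 𝓝 (0 : ℝ), G (Φ s) = (s, 0, 0) :=
    hctend.eventually (HasStrictFDerivAt.eventually_right_inverse hs)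
  have ev2 : ∀ᶠ s in 𝓝 (0 : ℝ), Φ s ∈ V := hΦtend.eventually (hVopen.eventually_mem hV0)
  have htt : Tendsto (fun s => ‖(Φ s).2.1‖) (𝓝 0) (𝓝 0) := by
    have h1 : Tendsto (fun s => (Φ s).2.1) (𝓝 0) (𝓝 (p₀.2.1)) :=
      ((continuous_fst.comp continuous_snd).tendsto p₀).comp hΦtend
    have h2 := h1.norm
    simpa [hp₀def] using h2
  have ev3 : ∀ᶠ s in 𝓝 (0 : ℝ), ‖(Φ s).2.1‖ < 1 / (2 * K) :=
    htt.eventually_lt_const (by positivity)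
  have ev4 : ∀ᶠ s in 𝓝 (0 : ℝ), ContDiffAt ℝ 2 Φ s := hΦsm.eventually (by norm_num)
  obtain ⟨W, hWid, hWopen, hWp₀⟩ := eventually_nhds_iff.mp
    (HasStrictFDerivAt.eventually_left_inverse hs)
  obtain ⟨u, v, huo, hvo, hu0, hvp, huv⟩ := isOpen_prod_iff.mp hWopen 0 (0, b / κ ^ 2) hWp₀
  obtain ⟨ε₂, hε₂, hball₂⟩ := Metric.isOpen_iff.mp huo 0 hu0
  obtain ⟨ε₁, hε₁, hev⟩ := Metric.eventually_nhds_iff.mp (ev1.and (ev2.and (ev3.and ev4)))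
  have hkey : ∀ s : ℝ, |s| < min ε₁ ε₂ →
      G (Φ s) = (s, 0, 0) ∧ Φ s ∈ V ∧ ‖(Φ s).2.1‖ < 1 / (2 * K) ∧ ContDiffAt ℝ 2 Φ s := by
    intro s hsε
    exact hev (by rw [Real.dist_eq, sub_zero]; exact hsε.trans_le (min_le_left _ _))
  have hcomp : ∀ s : ℝ, G (Φ s) = ((s, 0, 0) : ℝ × EuclideanSpace ℝ (Fin d) × ℝ) →
      (Φ s).1 = s ∧ Matrix.toEuclideanLin B (Φ s).2.1 + Rα (Φ s) = 0 ∧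
      κ ^ 2 * (Φ s).2.2 - b + Rψ (Φ s) = 0 := by
    intro s h
    simp only [hGdef, Prod.mk.injEq] at h
    exact ⟨h.1, h.2.1, h.2.2⟩
  have hpt : ∀ s : ℝ, (Φ s).1 = s →
      ((s, (Φ s).2.1, (Φ s).2.2) : ℝ × EuclideanSpace ℝ (Fin d) × ℝ) = Φ s := by
    intro s h
    exact Prod.ext_iff.mpr ⟨h.symm, rfl⟩
  have hWid' : ∀ y ∈ W, H (G y) = y := hWid
  have hΦH : ∀ s : ℝ, Φ s = H (s, 0, 0) := fun s => rfl
  clear_value H Φ LMclm K G A Aeq Lequiv p₀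
  refine ⟨min ε₁ ε₂, lt_min hε₁ hε₂, fun s => (Φ s).2.1, fun s => (Φ s).2.2, ?_, ?_, ?_, ?_,
    ?_, ?_, ?_⟩
  · intro x hx
    have hx' : |x| < min ε₁ ε₂ := abs_lt.mpr ⟨hx.1, hx.2⟩
    have hΦat := (hkey x hx').2.2.2
    exact (((contDiff_fst.comp contDiff_snd).contDiffAt.comp x hΦat).of_le
      one_le_two).contDiffWithinAt
  · intro x hx
    have hx' : |x| < min ε₁ ε₂ := abs_lt.mpr ⟨hx.1, hx.2⟩
    have hΦat := (hkey x hx').2.2.2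
    exact (((contDiff_snd.comp contDiff_snd).contDiffAt.comp x hΦat).of_le
      one_le_two).contDiffWithinAt
  · show (Φ 0).2.1 = 0
    rw [hΦ0, hp₀def]
  · show (Φ 0).2.2 = b / κ ^ 2
    rw [hΦ0, hp₀def]
  · intro s hsε
    obtain ⟨h1, hVs, _, _⟩ := hkey s hsε
    obtain ⟨hfst, hα, hψ⟩ := hcomp s h1
    have hp := hpt s hfst
    refine ⟨?_, ?_, ?_⟩
    · show ((s, (Φ s).2.1, (Φ s).2.2) : ℝ × EuclideanSpace ℝ (Fin d) × ℝ) ∈ V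
      rw [hp]; exact hVs
    · show κ ^ 2 * (Φ s).2.2 - b + Rψ (s, (Φ s).2.1, (Φ s).2.2) = 0
      rw [hp]; exact hψ
    · show Matrix.toEuclideanLin B ((Φ s).2.1) + Rα (s, (Φ s).2.1, (Φ s).2.2) = 0
      rw [hp]; exact hα
  · refine ⟨v, hvo, hvp, ?_⟩
    intro s hsε t' r' ht'U _hV heqψ heqα
    have hsu : s ∈ u := hball₂ (by
      rw [Metric.mem_ball, Real.dist_eq, sub_zero]
      exact hsε.trans_le (min_le_right _ _))
    have hxW : ((s, t', r') : ℝ × EuclideanSpace ℝ (Fin d) × ℝ) ∈ W :=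
      huv (Set.mk_mem_prod hsu ht'U)
    have hGx : G ((s, t', r') : ℝ × EuclideanSpace ℝ (Fin d) × ℝ) = (s, 0, 0) := by
      simp only [hGdef]
      rw [heqα, heqψ]
    have h := hWid' _ hxW
    rw [hGx] at h
    constructor
    · show t' = (Φ s).2.1
      rw [hΦH s]
      exact (congrArg (fun p : ℝ × EuclideanSpace ℝ (Fin d) × ℝ => p.2.1) h).symm
    · show r' = (Φ s).2.2
      rw [hΦH s]
      exact (congrArg (fun p : ℝ × EuclideanSpace ℝ (Fin d) × ℝ => p.2.2) h).symm
  · have hdivpos : (0:ℝ) ≤ C * (2 * K + 1) / κ ^ 2 :=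
      div_nonneg (mul_nonneg hC.le (by linarith)) hκ2pos.le
    refine ⟨2 * K + C * (2 * K + 1) / κ ^ 2 + 1, by linarith, ?_⟩
    intro s hsε
    obtain ⟨h1, hVs, hsm, _⟩ := hkey s hsε
    obtain ⟨hfst, hα, hψ⟩ := hcomp s h1
    have hBB : Matrix.toEuclideanLin B ((Φ s).2.1) = -(Rα (Φ s)) :=
      eq_neg_of_add_eq_zero_left hα
    have h5 : (Φ s).2.1 = LMclm (-(Rα (Φ s))) := by
      have h := hLinv ((Φ s).2.1)
      rw [hBB] at h
      rw [← h]
      simp [hLMdef]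
    have h6 : ‖(Φ s).2.1‖ ≤ ‖LMclm‖ * ‖Rα (Φ s)‖ := by
      rw [h5]
      calc ‖LMclm (-(Rα (Φ s)))‖ ≤ ‖LMclm‖ * ‖-(Rα (Φ s))‖ := LMclm.le_opNorm _
        _ = ‖LMclm‖ * ‖Rα (Φ s)‖ := by rw [norm_neg]
    have h7 : ‖Rα (Φ s)‖ ≤ C * (‖(Φ s).2.1‖ ^ 2 + s ^ 2) := by
      have h := hRαbound (Φ s) hVs
      rwa [hfst] at h
    have h8 : |Rψ (Φ s)| ≤ C * (‖(Φ s).2.1‖ + s ^ 2) := by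
      have h := hRψbound (Φ s) hVs
      rwa [hfst] at h
    have hnorm : (0 : ℝ) ≤ ‖LMclm‖ := norm_nonneg _
    have hKge : ‖LMclm‖ * C ≤ K := by rw [hKdef]; linarith
    have hA2 : ‖(Φ s).2.1‖ ≤ K * (‖(Φ s).2.1‖ ^ 2 + s ^ 2) := by
      calc ‖(Φ s).2.1‖ ≤ ‖LMclm‖ * ‖Rα (Φ s)‖ := h6
        _ ≤ ‖LMclm‖ * (C * (‖(Φ s).2.1‖ ^ 2 + s ^ 2)) :=
          mul_le_mul_of_nonneg_left h7 hnorm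
        _ = (‖LMclm‖ * C) * (‖(Φ s).2.1‖ ^ 2 + s ^ 2) := by ring
        _ ≤ K * (‖(Φ s).2.1‖ ^ 2 + s ^ 2) :=
          mul_le_mul_of_nonneg_right hKge (by positivity)
    have h2K : ‖(Φ s).2.1‖ * (2 * K) < 1 := (lt_div_iff₀ (by linarith)).mp hsm
    have hB2 : K * ‖(Φ s).2.1‖ ^ 2 ≤ (1 / 2) * ‖(Φ s).2.1‖ := by
      have hmul := mul_le_mul_of_nonneg_left h2K.le (norm_nonneg ((Φ s).2.1))
      rw [mul_one] at hmul
      linarith [hmul]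
    have hts2 : ‖(Φ s).2.1‖ ≤ 2 * K * s ^ 2 := by linarith
    constructor
    · show ‖(Φ s).2.1‖ ≤ (2 * K + C * (2 * K + 1) / κ ^ 2 + 1) * s ^ 2
      have hge : (0:ℝ) ≤ (C * (2 * K + 1) / κ ^ 2 + 1) * s ^ 2 :=
        mul_nonneg (by linarith) (sq_nonneg s)
      have hexp0 : (2 * K + C * (2 * K + 1) / κ ^ 2 + 1) * s ^ 2
          = 2 * K * s ^ 2 + (C * (2 * K + 1) / κ ^ 2 + 1) * s ^ 2 := by ring
      rw [hexp0]
      linarith [hts2, hge]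
    · show |(Φ s).2.2 - b / κ ^ 2| ≤ (2 * K + C * (2 * K + 1) / κ ^ 2 + 1) * s ^ 2
      have hx : (Φ s).2.2 - b / κ ^ 2 = -(Rψ (Φ s)) / κ ^ 2 := by
        field_simp
        linarith [hψ]
      rw [hx, abs_div, abs_neg, abs_of_pos hκ2pos, div_le_iff₀ hκ2pos]
      have h9 : |Rψ (Φ s)| ≤ C * (2 * K + 1) * s ^ 2 := by
        have hmul := mul_le_mul_of_nonneg_left hts2 hC.le
        have hexp1 : C * (‖(Φ s).2.1‖ + s ^ 2) = C * ‖(Φ s).2.1‖ + C * s ^ 2 := by ring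
        rw [hexp1] at h8
        have hexp2 : C * (2 * K + 1) * s ^ 2 = C * (2 * K * s ^ 2) + C * s ^ 2 := by ring
        rw [hexp2]
        linarith [h8, hmul]
      have hexp : (2 * K + C * (2 * K + 1) / κ ^ 2 + 1) * s ^ 2 * κ ^ 2
          = 2 * K * s ^ 2 * κ ^ 2 + C * (2 * K + 1) * s ^ 2 + s ^ 2 * κ ^ 2 := by
        field_simp
      have hpos1 : (0:ℝ) ≤ 2 * K * s ^ 2 * κ ^ 2 :=
        mul_nonneg (mul_nonneg (by linarith) (sq_nonneg s)) (sq_nonneg κ)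
      have hpos2 : (0:ℝ) ≤ s ^ 2 * κ ^ 2 := by positivity
      rw [hexp]
      linarith
end
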